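/- arXiv:2305.14939 — 6 statements merged into one kernel-verified Lean document; each statement's English description precedes it below -/
import Mathlib

section
/- Let a, b ∈ ℝⁿ be nonnegative vectors with ‖a‖₁ = ‖b‖₁ and let P ∈ ℝ₊^{n×n} be a nonnegative matrix. Then there exists a matrix P̂ ∈ Π(a,b) (i.e., P̂ is entrywise nonnegative with row sums P̂𝟏ₙ = a and column sums P̂ᵀ𝟏ₙ = b) such that ‖P − P̂‖₁ ≤ 2(‖a − P𝟏ₙ‖₁ + ‖b − Pᵀ𝟏ₙ‖₁). -/
/-- **Rounding error bound** (Lemma 7 of Altschuler–Weed–Rigollet).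
For nonnegative vectors `a, b` with equal total mass and a nonnegative matrix `P`,
there exists a matrix `Q ∈ Π(a,b)` (entrywise nonnegative, row sums `a`,
column sums `b`) with `‖P − Q‖₁ ≤ 2(‖a − P𝟏‖₁ + ‖b − Pᵀ𝟏‖₁)`. -/
theorem round_error {n : ℕ} (a b : Fin n → ℝ) (P : Matrix (Fin n) (Fin n) ℝ)
    (ha : ∀ i, 0 ≤ a i) (hb : ∀ j, 0 ≤ b j)
    (hP : ∀ i j, 0 ≤ P i j)
    (hab : ∑ i, a i = ∑ j, b j) :
    ∃ Q : Matrix (Fin n) (Fin n) ℝ,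
      (∀ i j, 0 ≤ Q i j) ∧
      (∀ i, ∑ j, Q i j = a i) ∧
      (∀ j, ∑ i, Q i j = b j) ∧
      (∑ i, ∑ j, |P i j - Q i j|) ≤
        2 * ((∑ i, |a i - ∑ j, P i j|) + (∑ j, |b j - ∑ i, P i j|)) := by
  classical
  set r : Fin n → ℝ := fun i => ∑ j, P i j with hr_def
  set c : Fin n → ℝ := fun j => ∑ i, P i j with hc_def
  have hr0 : ∀ i, 0 ≤ r i := fun i => Finset.sum_nonneg fun j _ => hP i j
  have hc0 : ∀ j, 0 ≤ c j := fun j => Finset.sum_nonneg fun i _ => hP i j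
  -- row scaling
  set x : Fin n → ℝ := fun i => if r i = 0 then 1 else min 1 (a i / r i) with hx_def
  have hx0 : ∀ i, 0 ≤ x i := by
    intro i
    by_cases h : r i = 0
    · simp [hx_def, h]
    · simp only [hx_def, h, if_false]
      exact le_min zero_le_one (div_nonneg (ha i) (hr0 i))
  have hx1 : ∀ i, x i ≤ 1 := by
    intro i
    by_cases h : r i = 0 <;> simp [hx_def, h]
  set P1 : Matrix (Fin n) (Fin n) ℝ := fun i j => P i j * x i with hP1_def
  have hP1nn : ∀ i j, 0 ≤ P1 i j := fun i j => mul_nonneg (hP i j) (hx0 i)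
  have hP1le : ∀ i j, P1 i j ≤ P i j := fun i j =>
    mul_le_of_le_one_right (hP i j) (hx1 i)
  have hP1row : ∀ i, ∑ j, P1 i j = min (a i) (r i) := by
    intro i
    have h1 : ∑ j, P1 i j = r i * x i := by
      simp only [hP1_def, hr_def]
      rw [← Finset.sum_mul]
    rw [h1]
    by_cases h : r i = 0
    · simp [hx_def, h, min_eq_right (ha i)]
    · have hrpos : 0 < r i := lt_of_le_of_ne (hr0 i) (Ne.symm h)
      simp only [hx_def, h, if_false]
      rcases le_total (a i) (r i) with h2 | h2
      · rw [min_eq_right ((div_le_one hrpos).mpr h2), min_eq_left h2,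
          mul_comm, div_mul_cancel₀ _ h]
      · rw [min_eq_left ((one_le_div hrpos).mpr h2), min_eq_right h2, mul_one]
  -- column scaling
  set c1 : Fin n → ℝ := fun j => ∑ i, P1 i j with hc1_def
  have hc10 : ∀ j, 0 ≤ c1 j := fun j => Finset.sum_nonneg fun i _ => hP1nn i j
  have hc1le : ∀ j, c1 j ≤ c j := fun j =>
    Finset.sum_le_sum fun i _ => hP1le i j
  set y : Fin n → ℝ := fun j => if c1 j = 0 then 1 else min 1 (b j / c1 j) with hy_def
  have hy0 : ∀ j, 0 ≤ y j := by
    intro j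
    by_cases h : c1 j = 0
    · simp [hy_def, h]
    · simp only [hy_def, h, if_false]
      exact le_min zero_le_one (div_nonneg (hb j) (hc10 j))
  have hy1 : ∀ j, y j ≤ 1 := by
    intro j
    by_cases h : c1 j = 0 <;> simp [hy_def, h]
  set P2 : Matrix (Fin n) (Fin n) ℝ := fun i j => P1 i j * y j with hP2_def
  have hP2nn : ∀ i j, 0 ≤ P2 i j := fun i j => mul_nonneg (hP1nn i j) (hy0 j)
  have hP2le : ∀ i j, P2 i j ≤ P1 i j := fun i j =>
    mul_le_of_le_one_right (hP1nn i j) (hy1 j)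
  have hP2col : ∀ j, ∑ i, P2 i j = min (b j) (c1 j) := by
    intro j
    have h1 : ∑ i, P2 i j = c1 j * y j := by
      simp only [hP2_def, hc1_def]
      rw [← Finset.sum_mul]
    rw [h1]
    by_cases h : c1 j = 0
    · simp [hy_def, h, min_eq_right (hb j)]
    · have hcpos : 0 < c1 j := lt_of_le_of_ne (hc10 j) (Ne.symm h)
      simp only [hy_def, h, if_false]
      rcases le_total (b j) (c1 j) with h2 | h2
      · rw [min_eq_right ((div_le_one hcpos).mpr h2), min_eq_left h2,
          mul_comm, div_mul_cancel₀ _ h]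
      · rw [min_eq_left ((one_le_div hcpos).mpr h2), min_eq_right h2, mul_one]
  -- deficiencies
  set ea : Fin n → ℝ := fun i => a i - ∑ j, P2 i j with hea_def
  set eb : Fin n → ℝ := fun j => b j - ∑ i, P2 i j with heb_def
  have hea0 : ∀ i, 0 ≤ ea i := by
    intro i
    have h1 : ∑ j, P2 i j ≤ ∑ j, P1 i j := Finset.sum_le_sum fun j _ => hP2le i j
    have h2 : (∑ j, P1 i j) ≤ a i := by rw [hP1row i]; exact min_le_left _ _
    simp only [hea_def]; linarith
  have heb0 : ∀ j, 0 ≤ eb j := by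
    intro j
    have h2 : (∑ i, P2 i j) ≤ b j := by rw [hP2col j]; exact min_le_left _ _
    simp only [heb_def]; linarith
  set Δ : ℝ := ∑ i, ea i with hΔ_def
  have hΔeb : ∑ j, eb j = Δ := by
    simp only [hΔ_def, hea_def, heb_def, Finset.sum_sub_distrib]
    rw [← hab, Finset.sum_comm]
  have hΔ0 : 0 ≤ Δ := Finset.sum_nonneg fun i _ => hea0 i
  set d : ℝ := if Δ = 0 then 1 else Δ with hd_def
  have hd0 : 0 < d := by
    by_cases h : Δ = 0
    · simp [hd_def, h]
    · simp only [hd_def, h, if_false]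
      exact lt_of_le_of_ne hΔ0 (Ne.symm h)
  have hea_zero : Δ = 0 → ∀ i, ea i = 0 := by
    intro h i
    exact (Finset.sum_eq_zero_iff_of_nonneg (fun i _ => hea0 i)).mp
      (by rw [← hΔ_def]; exact h) i (Finset.mem_univ i)
  have heb_zero : Δ = 0 → ∀ j, eb j = 0 := by
    intro h j
    exact (Finset.sum_eq_zero_iff_of_nonneg (fun j _ => heb0 j)).mp
      (by rw [hΔeb]; exact h) j (Finset.mem_univ j)
  -- the rounded matrix
  refine ⟨fun i j => P2 i j + ea i * eb j / d, ?_, ?_, ?_, ?_⟩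
  · intro i j
    exact add_nonneg (hP2nn i j)
      (div_nonneg (mul_nonneg (hea0 i) (heb0 j)) hd0.le)
  · intro i
    have h1 : ∑ j, (P2 i j + ea i * eb j / d) =
        (∑ j, P2 i j) + ea i * Δ / d := by
      rw [Finset.sum_add_distrib]
      congr 1
      rw [← Finset.sum_div, ← Finset.mul_sum, hΔeb]
    rw [h1]
    by_cases h : Δ = 0
    · have := hea_zero h i
      simp only [hea_def] at this
      rw [h]
      simp only [mul_zero, zero_div, add_zero]
      linarith
    · simp only [hd_def, h, if_false]
      rw [mul_div_assoc, div_self h, mul_one]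
      simp only [hea_def]; ring
  · intro j
    have h1 : ∑ i, (P2 i j + ea i * eb j / d) =
        (∑ i, P2 i j) + Δ * eb j / d := by
      rw [Finset.sum_add_distrib]
      congr 1
      rw [← Finset.sum_div, ← Finset.sum_mul, ← hΔ_def]
    rw [h1]
    by_cases h : Δ = 0
    · have := heb_zero h j
      simp only [heb_def] at this
      rw [h]
      simp only [zero_mul, zero_div, add_zero]
      linarith
    · simp only [hd_def, h, if_false]
      rw [mul_comm Δ (eb j), mul_div_assoc, div_self h, mul_one]
      simp only [heb_def]; ring
  -- the error bound
  · have key : ∀ i j, |P i j - (P2 i j + ea i * eb j / d)| ≤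
        (P i j - P1 i j) + (P1 i j - P2 i j) + ea i * eb j / d := by
      intro i j
      have ht : 0 ≤ ea i * eb j / d :=
        div_nonneg (mul_nonneg (hea0 i) (heb0 j)) hd0.le
      have hu : 0 ≤ P i j - P2 i j := by
        have h1 := hP2le i j; have h2 := hP1le i j; linarith
      have heq : P i j - (P2 i j + ea i * eb j / d) =
          (P i j - P2 i j) - ea i * eb j / d := by ring
      rw [heq]
      have habs : |(P i j - P2 i j) - ea i * eb j / d| ≤
          |P i j - P2 i j| + |ea i * eb j / d| := abs_sub _ _
      rw [abs_of_nonneg hu, abs_of_nonneg ht] at habs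
      linarith
    have step : (∑ i, ∑ j, |P i j - (P2 i j + ea i * eb j / d)|) ≤
        (∑ i, ∑ j, (P i j - P1 i j)) + (∑ i, ∑ j, (P1 i j - P2 i j)) +
          (∑ i, ∑ j, ea i * eb j / d) := by
      rw [← Finset.sum_add_distrib, ← Finset.sum_add_distrib]
      refine Finset.sum_le_sum fun i _ => ?_
      rw [← Finset.sum_add_distrib, ← Finset.sum_add_distrib]
      exact Finset.sum_le_sum fun j _ => key i j
    -- bound each of the three terms
    have hT1 : (∑ i, ∑ j, (P i j - P1 i j)) = ∑ i, (r i - min (a i) (r i)) := by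
      refine Finset.sum_congr rfl fun i _ => ?_
      rw [Finset.sum_sub_distrib, hP1row i]
    have hT1aux : (∑ i, (r i - min (a i) (r i))) ≤ ∑ i, |a i - r i| := by
      refine Finset.sum_le_sum fun i _ => ?_
      rcases le_total (a i) (r i) with h | h
      · rw [min_eq_left h]
        linarith [neg_le_abs (a i - r i)]
      · rw [min_eq_right h]
        simp
    have hT1le : (∑ i, ∑ j, (P i j - P1 i j)) ≤ ∑ i, |a i - r i| := by
      rw [hT1]; exact hT1aux
    have hT2 : (∑ i, ∑ j, (P1 i j - P2 i j)) = ∑ j, (c1 j - min (b j) (c1 j)) := by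
      rw [Finset.sum_comm]
      refine Finset.sum_congr rfl fun j _ => ?_
      rw [Finset.sum_sub_distrib, hP2col j, hc1_def]
    have hT2le : (∑ i, ∑ j, (P1 i j - P2 i j)) ≤ ∑ j, |b j - c j| := by
      rw [hT2]
      refine Finset.sum_le_sum fun j _ => ?_
      rcases le_total (b j) (c1 j) with h | h
      · rw [min_eq_left h]
        linarith [neg_le_abs (b j - c j), hc1le j]
      · rw [min_eq_right h]
        simp
    have hT3 : (∑ i, ∑ j, ea i * eb j / d) = Δ := by
      have h1 : (∑ i, ∑ j, ea i * eb j / d) = Δ * Δ / d := by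
        rw [Finset.sum_comm]
        have hh : ∀ j, (∑ i, ea i * eb j / d) = Δ * eb j / d := by
          intro j
          rw [← Finset.sum_div, ← Finset.sum_mul, ← hΔ_def]
        rw [Finset.sum_congr rfl fun j _ => hh j]
        rw [← Finset.sum_div, ← Finset.mul_sum, hΔeb]
      rw [h1]
      by_cases h : Δ = 0
      · rw [h]; simp
      · simp only [hd_def, h, if_false]
        rw [mul_div_assoc, div_self h, mul_one]
    have hT3le : (∑ i, ∑ j, ea i * eb j / d) ≤
        (∑ j, |b j - c j|) + ∑ i, |a i - r i| := by
      rw [hT3]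
      have h1 : Δ = ∑ j, (b j - min (b j) (c1 j)) := by
        rw [← hΔeb]
        refine Finset.sum_congr rfl fun j _ => ?_
        simp only [heb_def]
        rw [hP2col j]
      have h2 : ∑ j, (c j - c1 j) = ∑ i, (r i - min (a i) (r i)) := by
        have hh : ∑ j, (c j - c1 j) = ∑ i, ∑ j, (P i j - P1 i j) := by
          rw [Finset.sum_comm (s := Finset.univ) (t := Finset.univ)
            (f := fun i j => P i j - P1 i j)]
          refine Finset.sum_congr rfl fun j _ => ?_
          rw [Finset.sum_sub_distrib, hc_def, hc1_def]
        rw [hh, hT1]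
      have h3 : Δ ≤ (∑ j, |b j - c j|) + ∑ j, (c j - c1 j) := by
        rw [h1, ← Finset.sum_add_distrib]
        refine Finset.sum_le_sum fun j _ => ?_
        rcases le_total (b j) (c1 j) with h | h
        · rw [min_eq_left h]
          have h4 := hc1le j
          have h5 := abs_nonneg (b j - c j)
          linarith
        · rw [min_eq_right h]
          linarith [le_abs_self (b j - c j), hc1le j]
      rw [h2] at h3
      linarith [hT1aux]
    show (∑ i, ∑ j, |P i j - (P2 i j + ea i * eb j / d)|) ≤
        2 * ((∑ i, |a i - r i|) + (∑ j, |b j - c j|))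
    linarith [step, hT1le, hT2le, hT3le]
end

section
/- Let a, b ∈ Δₙ be probability vectors, C ∈ ℝ₊^{n×n} a nonnegative cost matrix, γ > 0, and K := exp(−C/γ) entrywise. Let B = diag(u) K diag(v) with u, v ∈ ℝ_{++}ⁿ be such that ‖B‖₁ = 1 (B is a probability matrix). Then every matrix B̂ ∈ Π(a,b) satisfying ‖B − B̂‖₁ ≤ 2(‖B𝟏ₙ − a‖₁ + ‖Bᵀ𝟏ₙ − b‖₁) satisfies ⟨C, B̂⟩ ≤ min_{P ∈ Π(a,b)} ⟨C, P⟩ + 2γ log n + 4(‖B𝟏ₙ − a‖₁ + ‖Bᵀ𝟏ₙ − b‖₁)‖C‖_∞. -/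
/-!
Given `P ∈ Π(a, b)`, round it to a plan `Q` with the marginals `r = B𝟏`, `c = Bᵀ𝟏` of `B`,
moving at most `2(‖r - a‖₁ + ‖c - b‖₁)` mass. Since `log B i j = log u i + log v j - C i j / γ`,
on `Π(r, c)` the cost `⟨C, ·⟩` equals `-γ ∑ · log B` up to a constant, so Gibbs' inequality and
`H(B) ≤ 2 log n` give `⟨C, B⟩ ≤ ⟨C, Q⟩ + 2γ log n`. Both moves of mass, `B ↦ B̂` and `P ↦ Q`,
change the cost by at most `‖C‖_∞` times the mass moved.
-/

open Finset Real
open scoped Matrix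

namespace Real

lemma mul_log_sub_mul_log_le {t q : ℝ} (ht : 0 < t) (hq : 0 ≤ q) :
    q * log t - q * log q ≤ t - q := by
  rcases hq.eq_or_lt with rfl | hq
  · simp [ht.le]
  · have h := mul_le_mul_of_nonneg_left (log_le_sub_one_of_pos (div_pos ht hq)) hq.le
    rw [log_div ht.ne' hq.ne', mul_sub_one, mul_div_cancel₀ t hq.ne'] at h
    linarith

variable {α : Type*} [Fintype α] {p q : α → ℝ}

lemma sum_mul_log_le_sum_mul_log (hp : ∀ i, 0 ≤ p i) (hq : ∀ i, 0 < q i)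
    (hqp : ∑ i, q i ≤ ∑ i, p i) :
    ∑ i, p i * log (q i) ≤ ∑ i, p i * log (p i) := by
  have h : ∑ i, (p i * log (q i) - p i * log (p i)) ≤ ∑ i, (q i - p i) :=
    sum_le_sum fun i _ => mul_log_sub_mul_log_le (hq i) (hp i)
  simp only [sum_sub_distrib] at h
  linarith

lemma sum_mul_log_nonpos (hp : ∀ i, 0 ≤ p i) (hp1 : ∑ i, p i = 1) :
    ∑ i, p i * log (p i) ≤ 0 :=
  sum_nonpos fun i _ => mul_log_nonpos (hp i) <|
    hp1 ▸ single_le_sum (fun j _ => hp j) (mem_univ i)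

lemma neg_log_card_le_sum_mul_log (hp : ∀ i, 0 ≤ p i) (hp1 : ∑ i, p i = 1) :
    -log (Fintype.card α) ≤ ∑ i, p i * log (p i) := by
  have hN : (0 : ℝ) < Fintype.card α := by
    rcases isEmpty_or_nonempty α with hα | hα
    · simp at hp1
    · exact_mod_cast Fintype.card_pos
  have hgibbs := sum_mul_log_le_sum_mul_log (q := fun _ => (Fintype.card α : ℝ)⁻¹) hp
    (fun _ => inv_pos.2 hN) (by simp [hp1, hN.ne'])
  rwa [← sum_mul, hp1, one_mul, log_inv] at hgibbs

end Real

lemma min_one_div_mul_self {a r : ℝ} (ha : 0 ≤ a) (hr : 0 ≤ r) :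
    min 1 (r / a) * a = min a r := by
  rcases ha.eq_or_lt with rfl | ha
  · simp [hr]
  · rw [min_mul_of_nonneg _ _ ha.le, one_mul, div_mul_cancel₀ _ ha.ne']

lemma sub_min_le_abs_sub_of_le {x y c : ℝ} (hxy : x ≤ y) : x - min x c ≤ |c - y| := by
  rw [abs_sub_comm]
  rcases le_total x c with h | h
  · simp [min_eq_left h]
  · rw [min_eq_right h]
    exact (sub_le_sub_right hxy c).trans (le_abs_self _)

variable {ι κ : Type*}

/-- Membership in the transport polytope `Π(r, c)`. -/
structure IsTransportPlan [Fintype ι] [Fintype κ] (P : Matrix ι κ ℝ) (r : ι → ℝ) (c : κ → ℝ) :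
    Prop where
  nonneg : ∀ i j, 0 ≤ P i j
  row_sum : ∀ i, ∑ j, P i j = r i
  col_sum : ∀ j, ∑ i, P i j = c j

lemma exists_le_rowSum_eq_min [Fintype κ] {P : Matrix ι κ ℝ} (hP : ∀ i j, 0 ≤ P i j)
    {r : ι → ℝ} (hr : ∀ i, 0 ≤ r i) :
    ∃ F : Matrix ι κ ℝ, (∀ i j, 0 ≤ F i j ∧ F i j ≤ P i j) ∧
      ∀ i, ∑ j, F i j = min (∑ j, P i j) (r i) := by
  have ha : ∀ i, 0 ≤ ∑ j, P i j := fun i => sum_nonneg fun j _ => hP i j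
  refine ⟨fun i j => min 1 (r i / ∑ j, P i j) * P i j, fun i j => ⟨?_, ?_⟩, fun i => ?_⟩
  · exact mul_nonneg (le_min zero_le_one (div_nonneg (hr i) (ha i))) (hP i j)
  · exact mul_le_of_le_one_left (hP i j) (min_le_left _ _)
  · rw [← mul_sum, min_one_div_mul_self (ha i) (hr i)]

lemma exists_le_colSum_eq_min [Fintype ι] {P : Matrix ι κ ℝ} (hP : ∀ i j, 0 ≤ P i j)
    {c : κ → ℝ} (hc : ∀ j, 0 ≤ c j) :
    ∃ F : Matrix ι κ ℝ, (∀ i j, 0 ≤ F i j ∧ F i j ≤ P i j) ∧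
      ∀ j, ∑ i, F i j = min (∑ i, P i j) (c j) := by
  obtain ⟨F, hFP, hF⟩ := exists_le_rowSum_eq_min (P := Pᵀ) (fun j i => hP i j) hc
  exact ⟨Fᵀ, fun i j => hFP j i, hF⟩

variable [Fintype ι] [Fintype κ]

lemma exists_isTransportPlan_ge {F : Matrix ι κ ℝ} (hF : ∀ i j, 0 ≤ F i j) {r : ι → ℝ}
    {c : κ → ℝ} (hFr : ∀ i, ∑ j, F i j ≤ r i) (hFc : ∀ j, ∑ i, F i j ≤ c j)
    (hrc : ∑ i, r i = ∑ j, c j) :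
    ∃ Q : Matrix ι κ ℝ, IsTransportPlan Q r c ∧ ∀ i j, F i j ≤ Q i j := by
  set er : ι → ℝ := fun i => r i - ∑ j, F i j
  set ec : κ → ℝ := fun j => c j - ∑ i, F i j
  have her : ∀ i, 0 ≤ er i := fun i => sub_nonneg.2 (hFr i)
  have hec : ∀ j, 0 ≤ ec j := fun j => sub_nonneg.2 (hFc j)
  set s := ∑ i, er i
  have hs : ∑ j, ec j = s := by
    simp only [er, ec, s, sum_sub_distrib, hrc]
    rw [sum_comm]
  by_cases hs0 : s = 0
  · have her0 := (sum_eq_zero_iff_of_nonneg fun i _ => her i).1 hs0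
    have hec0 := (sum_eq_zero_iff_of_nonneg fun j _ => hec j).1 (hs.trans hs0)
    refine ⟨F, ⟨hF, fun i => ?_, fun j => ?_⟩, fun _ _ => le_rfl⟩
    · linarith [her0 i (mem_univ i)]
    · linarith [hec0 j (mem_univ j)]
  -- Both deficits have total mass `s`, so `er ecᵀ / s` fills the rows and the columns at once.
  have hE : ∀ i j, 0 ≤ er i * ec j / s := fun i j =>
    div_nonneg (mul_nonneg (her i) (hec j)) (sum_nonneg fun i _ => her i)
  refine ⟨fun i j => F i j + er i * ec j / s,
    ⟨fun i j => add_nonneg (hF i j) (hE i j), fun i => ?_, fun j => ?_⟩,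
    fun i j => le_add_of_nonneg_right (hE i j)⟩
  · rw [sum_add_distrib, ← sum_div, ← mul_sum, hs, mul_div_cancel_right₀ _ hs0]
    ring
  · rw [sum_add_distrib, ← sum_div, ← sum_mul, mul_div_cancel_left₀ _ hs0]
    ring

theorem exists_isTransportPlan_sum_abs_sub_le {P : Matrix ι κ ℝ} (hP : ∀ i j, 0 ≤ P i j)
    {r : ι → ℝ} {c : κ → ℝ} (hr : ∀ i, 0 ≤ r i) (hc : ∀ j, 0 ≤ c j)
    (hrP : ∑ i, r i = ∑ i, ∑ j, P i j) (hrc : ∑ i, r i = ∑ j, c j) :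
    ∃ Q : Matrix ι κ ℝ, IsTransportPlan Q r c ∧
      ∑ i, ∑ j, |Q i j - P i j| ≤
        2 * ((∑ i, |r i - ∑ j, P i j|) + (∑ j, |c j - ∑ i, P i j|)) := by
  obtain ⟨F, hFP, hFr⟩ := exists_le_rowSum_eq_min hP hr
  obtain ⟨G, hGF, hGc⟩ := exists_le_colSum_eq_min (fun i j => (hFP i j).1) hc
  have hGr : ∀ i, ∑ j, G i j ≤ r i := fun i =>
    ((sum_le_sum fun j _ => (hGF i j).2).trans_eq (hFr i)).trans (min_le_right _ _)
  obtain ⟨Q, hQ, hGQ⟩ := exists_isTransportPlan_ge (fun i j => (hGF i j).1) hGr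
    (fun j => (hGc j).trans_le (min_le_right _ _)) hrc
  have hGP : ∀ i j, G i j ≤ P i j := fun i j => (hGF i j).2.trans (hFP i j).2
  have hdeficit : ∑ i, ∑ j, P i j - ∑ i, ∑ j, G i j ≤
      (∑ i, |r i - ∑ j, P i j|) + (∑ j, |c j - ∑ i, P i j|) := by
    have hrow : ∑ i, ∑ j, P i j - ∑ i, ∑ j, F i j ≤ ∑ i, |r i - ∑ j, P i j| := by
      rw [← sum_sub_distrib]
      exact sum_le_sum fun i _ => (hFr i).symm ▸ sub_min_le_abs_sub_of_le le_rfl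
    have hcol : ∑ i, ∑ j, F i j - ∑ i, ∑ j, G i j ≤ ∑ j, |c j - ∑ i, P i j| := by
      rw [sum_comm (f := fun i j => F i j), sum_comm (f := fun i j => G i j), ← sum_sub_distrib]
      exact sum_le_sum fun j _ => (hGc j).symm ▸
        sub_min_le_abs_sub_of_le (sum_le_sum fun i _ => (hFP i j).2)
    linarith
  have hQsum : ∑ i, ∑ j, Q i j = ∑ i, ∑ j, P i j := by
    rw [← hrP]
    exact sum_congr rfl fun i _ => hQ.row_sum i
  refine ⟨Q, hQ, ?_⟩
  calc ∑ i, ∑ j, |Q i j - P i j|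
      ≤ ∑ i, ∑ j, ((Q i j - G i j) + (P i j - G i j)) :=
        sum_le_sum fun i _ => sum_le_sum fun j _ =>
          abs_sub_le_iff.2 ⟨by linarith [hGP i j], by linarith [hGQ i j]⟩
    _ = 2 * (∑ i, ∑ j, P i j - ∑ i, ∑ j, G i j) := by
        simp only [sum_add_distrib, sum_sub_distrib, hQsum]
        ring
    _ ≤ _ := by linarith

lemma sum_sum_add_mul_eq_of_rowSum_colSum_eq {X Y : Matrix ι κ ℝ} (f : ι → ℝ) (g : κ → ℝ)
    (hr : ∀ i, ∑ j, X i j = ∑ j, Y i j) (hc : ∀ j, ∑ i, X i j = ∑ i, Y i j) :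
    ∑ i, ∑ j, (f i + g j) * X i j = ∑ i, ∑ j, (f i + g j) * Y i j := by
  have hsplit : ∀ M : Matrix ι κ ℝ, ∑ i, ∑ j, (f i + g j) * M i j =
      ∑ i, f i * ∑ j, M i j + ∑ j, g j * ∑ i, M i j := by
    intro M
    simp only [add_mul, sum_add_distrib, mul_sum]
    rw [sum_comm (f := fun i j => g j * M i j)]
  simp only [hsplit, hr, hc]

theorem sum_mul_le_sum_mul_add_log_card {C B Q : Matrix ι κ ℝ} {u : ι → ℝ} {v : κ → ℝ}
    {γ : ℝ} (hγ : 0 < γ) (hu : ∀ i, 0 < u i) (hv : ∀ j, 0 < v j)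
    (hB : ∀ i j, B i j = u i * exp (-C i j / γ) * v j) (hB1 : ∑ i, ∑ j, B i j = 1)
    (hQ : IsTransportPlan Q (fun i => ∑ j, B i j) (fun j => ∑ i, B i j)) :
    ∑ i, ∑ j, C i j * B i j ≤
      ∑ i, ∑ j, C i j * Q i j + γ * log (Fintype.card ι * Fintype.card κ) := by
  have hBpos : ∀ i j, 0 < B i j := fun i j =>
    hB i j ▸ mul_pos (mul_pos (hu i) (exp_pos _)) (hv j)
  have hC : ∀ i j, C i j = γ * (log (u i) + log (v j)) - γ * log (B i j) := by
    intro i j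
    rw [hB, log_mul (mul_pos (hu i) (exp_pos _)).ne' (hv j).ne',
      log_mul (hu i).ne' (exp_ne_zero _), log_exp]
    field_simp
    ring
  have hcost : ∀ M : Matrix ι κ ℝ, ∑ i, ∑ j, C i j * M i j =
      γ * ∑ i, ∑ j, (log (u i) + log (v j)) * M i j -
        γ * ∑ i, ∑ j, M i j * log (B i j) := by
    intro M
    simp only [mul_sum, ← sum_sub_distrib]
    exact sum_congr rfl fun i _ => sum_congr rfl fun j _ => by rw [hC]; ring
  have hpot := sum_sum_add_mul_eq_of_rowSum_colSum_eq (fun i => log (u i)) (fun j => log (v j))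
    (fun i => (hQ.row_sum i).symm) (fun j => (hQ.col_sum j).symm)
  have hQ1 : ∑ i, ∑ j, Q i j = 1 := by
    rw [← hB1]
    exact sum_congr rfl fun i _ => hQ.row_sum i
  have hgibbs : ∑ i, ∑ j, Q i j * log (B i j) ≤ ∑ i, ∑ j, Q i j * log (Q i j) := by
    simpa only [Fintype.sum_prod_type] using
      sum_mul_log_le_sum_mul_log (p := fun x : ι × κ => Q x.1 x.2)
        (q := fun x => B x.1 x.2) (fun x => hQ.nonneg x.1 x.2) (fun x => hBpos x.1 x.2)
        (by simp only [Fintype.sum_prod_type, hB1, hQ1, le_refl])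
  have hQent : ∑ i, ∑ j, Q i j * log (Q i j) ≤ 0 := by
    simpa only [Fintype.sum_prod_type] using
      sum_mul_log_nonpos (p := fun x : ι × κ => Q x.1 x.2) (fun x => hQ.nonneg x.1 x.2)
        (by simpa only [Fintype.sum_prod_type] using hQ1)
  have hBent : -log (Fintype.card ι * Fintype.card κ) ≤ ∑ i, ∑ j, B i j * log (B i j) := by
    simpa only [Fintype.sum_prod_type, Fintype.card_prod, Nat.cast_mul] using
      neg_log_card_le_sum_mul_log (p := fun x : ι × κ => B x.1 x.2)
        (fun x => (hBpos x.1 x.2).le) (by simpa only [Fintype.sum_prod_type] using hB1)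
  calc ∑ i, ∑ j, C i j * B i j
      = ∑ i, ∑ j, C i j * Q i j + γ * (∑ i, ∑ j, Q i j * log (B i j) -
          ∑ i, ∑ j, B i j * log (B i j)) := by
        rw [hcost B, hcost Q, hpot]
        ring
    _ ≤ ∑ i, ∑ j, C i j * Q i j + γ * log (Fintype.card ι * Fintype.card κ) := by
        gcongr
        linarith

lemma abs_le_iSup_iSup_abs (C : Matrix ι κ ℝ) (i : ι) (j : κ) :
    |C i j| ≤ ⨆ i, ⨆ j, |C i j| :=
  (le_ciSup (Set.finite_range _).bddAbove j).trans
    (le_ciSup (f := fun i => ⨆ j, |C i j|) (Set.finite_range _).bddAbove i)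

lemma abs_sum_mul_sub_sum_mul_le (C X Y : Matrix ι κ ℝ) :
    |∑ i, ∑ j, C i j * X i j - ∑ i, ∑ j, C i j * Y i j| ≤
      (∑ i, ∑ j, |X i j - Y i j|) * ⨆ i, ⨆ j, |C i j| :=
  calc |∑ i, ∑ j, C i j * X i j - ∑ i, ∑ j, C i j * Y i j|
      = |∑ i, ∑ j, C i j * (X i j - Y i j)| := by simp only [mul_sub, sum_sub_distrib]
    _ ≤ ∑ i, ∑ j, |C i j * (X i j - Y i j)| :=
        (abs_sum_le_sum_abs _ _).trans (sum_le_sum fun i _ => abs_sum_le_sum_abs _ _)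
    _ ≤ ∑ i, ∑ j, |X i j - Y i j| * ⨆ i, ⨆ j, |C i j| :=
        sum_le_sum fun i _ => sum_le_sum fun j _ => by
          rw [abs_mul, mul_comm]
          exact mul_le_mul_of_nonneg_left (abs_le_iSup_iSup_abs C i j) (abs_nonneg _)
    _ = (∑ i, ∑ j, |X i j - Y i j|) * ⨆ i, ⨆ j, |C i j| := by simp only [sum_mul]

theorem rounded_plan_cost_bound_general {n : ℕ} (a b : Fin n → ℝ)
    (C : Matrix (Fin n) (Fin n) ℝ) (γ : ℝ) (hγ : 0 < γ)
    (ha1 : ∑ i, a i = 1)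
    (u v : Fin n → ℝ) (hu : ∀ i, 0 < u i) (hv : ∀ j, 0 < v j)
    (B : Matrix (Fin n) (Fin n) ℝ)
    (hB : ∀ i j, B i j = u i * Real.exp (-C i j / γ) * v j)
    (hBsum : ∑ i, ∑ j, |B i j| = 1)
    (Bhat : Matrix (Fin n) (Fin n) ℝ)
    (hclose : ∑ i, ∑ j, |B i j - Bhat i j| ≤
      2 * ((∑ i, |(∑ j, B i j) - a i|) + (∑ j, |(∑ i, B i j) - b j|))) :
    ∀ P : Matrix (Fin n) (Fin n) ℝ,
      (∀ i j, 0 ≤ P i j) → (∀ i, ∑ j, P i j = a i) → (∀ j, ∑ i, P i j = b j) →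
      ∑ i, ∑ j, C i j * Bhat i j ≤
        (∑ i, ∑ j, C i j * P i j) + 2 * γ * Real.log n +
          4 * ((∑ i, |(∑ j, B i j) - a i|) + (∑ j, |(∑ i, B i j) - b j|)) *
            (⨆ i, ⨆ j, |C i j|) := by
  intro P hP0 hPr hPc
  have hBpos : ∀ i j, 0 < B i j := fun i j =>
    hB i j ▸ mul_pos (mul_pos (hu i) (exp_pos _)) (hv j)
  have hB1 : ∑ i, ∑ j, B i j = 1 := by simpa only [abs_of_pos (hBpos _ _)] using hBsum
  obtain ⟨Q, hQ, hQP⟩ := exists_isTransportPlan_sum_abs_sub_le hP0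
    (r := fun i => ∑ j, B i j) (c := fun j => ∑ i, B i j)
    (fun i => sum_nonneg fun j _ => (hBpos i j).le)
    (fun j => sum_nonneg fun i _ => (hBpos i j).le) (by simp only [hB1, hPr, ha1]) sum_comm
  simp only [hPr, hPc] at hQP
  have hBQ := sum_mul_le_sum_mul_add_log_card hγ hu hv hB hB1 hQ
  rw [Fintype.card_fin, ← sq, log_pow, Nat.cast_ofNat] at hBQ
  have hS : 0 ≤ ⨆ i, ⨆ j, |C i j| :=
    iSup_nonneg fun i => iSup_nonneg fun j => abs_nonneg (C i j)
  have hBhatB := (abs_le.1 (abs_sum_mul_sub_sum_mul_le C B Bhat)).1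
  have hQP' := (le_abs_self _).trans (abs_sum_mul_sub_sum_mul_le C Q P)
  linarith [mul_le_mul_of_nonneg_right hclose hS, mul_le_mul_of_nonneg_right hQP hS]

/-- **Approximation bound after rounding** (Theorem 1 of Altschuler–Weed–Rigollet).
Let `a, b` be probability vectors, `C ≥ 0` a cost matrix, `γ > 0`,
`K = exp(−C/γ)` entrywise, and `B = diag(u) K diag(v)` a probability matrix
(`u, v > 0`, `‖B‖₁ = 1`).  Then any `B̂ ∈ Π(a,b)` with
`‖B − B̂‖₁ ≤ 2(‖B𝟏 − a‖₁ + ‖Bᵀ𝟏 − b‖₁)` satisfies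
`⟨C,B̂⟩ ≤ min_{P ∈ Π(a,b)} ⟨C,P⟩ + 2γ log n + 4(‖B𝟏 − a‖₁ + ‖Bᵀ𝟏 − b‖₁)‖C‖_∞`. -/
theorem rounded_plan_cost_bound {n : ℕ} (a b : Fin n → ℝ)
    (C : Matrix (Fin n) (Fin n) ℝ) (γ : ℝ) (hγ : 0 < γ)
    (ha0 : ∀ i, 0 ≤ a i) (hb0 : ∀ j, 0 ≤ b j)
    (ha1 : ∑ i, a i = 1) (hb1 : ∑ j, b j = 1)
    (hC : ∀ i j, 0 ≤ C i j)
    (u v : Fin n → ℝ) (hu : ∀ i, 0 < u i) (hv : ∀ j, 0 < v j)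
    (B : Matrix (Fin n) (Fin n) ℝ)
    (hB : ∀ i j, B i j = u i * Real.exp (-C i j / γ) * v j)
    (hBsum : ∑ i, ∑ j, |B i j| = 1)
    (Bhat : Matrix (Fin n) (Fin n) ℝ)
    (hBhat0 : ∀ i j, 0 ≤ Bhat i j)
    (hBhatr : ∀ i, ∑ j, Bhat i j = a i)
    (hBhatc : ∀ j, ∑ i, Bhat i j = b j)
    (hclose : ∑ i, ∑ j, |B i j - Bhat i j| ≤
      2 * ((∑ i, |(∑ j, B i j) - a i|) + (∑ j, |(∑ i, B i j) - b j|))) :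
    ∀ P : Matrix (Fin n) (Fin n) ℝ,
      (∀ i j, 0 ≤ P i j) → (∀ i, ∑ j, P i j = a i) → (∀ j, ∑ i, P i j = b j) →
      ∑ i, ∑ j, C i j * Bhat i j ≤
        (∑ i, ∑ j, C i j * P i j) + 2 * γ * Real.log n +
          4 * ((∑ i, |(∑ j, B i j) - a i|) + (∑ j, |(∑ i, B i j) - b j|)) *
            (⨆ i, ⨆ j, |C i j|) :=
  rounded_plan_cost_bound_general a b C γ hγ ha1 u v hu hv B hB hBsum Bhat hclose
end

section
/- Let a, b ∈ Δₙ be strictly positive probability vectors, C ∈ ℝ₊^{n×n}, γ > 0, K := exp(−C/γ). Let (f_k, g_k) be the Sinkhorn iterates starting from arbitrary f₀, g₀ ∈ ℝⁿ, and P_k := diag(e^{f_k/γ}) K diag(e^{g_k/γ}). Then for every k ≥ 2, h(f_{k+1}, g_{k+1}) − h(f_k, g_k) ≥ (γ/2)(‖P_k𝟏ₙ − a‖₁ + ‖P_kᵀ𝟏ₙ − b‖₁)². -/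
/-- The dual entropic OT objective
`h(f,g) = ⟨f,a⟩ + ⟨g,b⟩ − γ Σ_{i,j} exp((f_i + g_j − C_{ij})/γ)`. -/
noncomputable def dualObj {n : ℕ} (a b : Fin n → ℝ) (C : Matrix (Fin n) (Fin n) ℝ)
    (γ : ℝ) (f g : Fin n → ℝ) : ℝ :=
  (∑ i, f i * a i) + (∑ j, g j * b j) -
    γ * ∑ i, ∑ j, Real.exp ((f i + g j - C i j) / γ)

/-- The transport plan `P = diag(e^{f/γ}) K diag(e^{g/γ})` with `K = exp(−C/γ)`. -/
noncomputable def plan {n : ℕ} (C : Matrix (Fin n) (Fin n) ℝ) (γ : ℝ)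
    (f g : Fin n → ℝ) : Matrix (Fin n) (Fin n) ℝ :=
  fun i j => Real.exp (f i / γ) * Real.exp (-C i j / γ) * Real.exp (g j / γ)

/-- `(f k, g k)` is the sequence of Sinkhorn iterates (in dual form): for even `k`,
`f (k+1) = γ log a − γ log (K e^{g k / γ})` and `g (k+1) = g k`; for odd `k`,
`f (k+1) = f k` and `g (k+1) = γ log b − γ log (Kᵀ e^{f k / γ})`,
where `K = exp(−C/γ)`. -/
def SinkhornSeq {n : ℕ} (a b : Fin n → ℝ) (C : Matrix (Fin n) (Fin n) ℝ) (γ : ℝ)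
    (f g : ℕ → Fin n → ℝ) : Prop :=
  ∀ k : ℕ,
    (Even k →
      f (k+1) = (fun i => γ * Real.log (a i) -
        γ * Real.log (∑ j, Real.exp (-C i j / γ) * Real.exp (g k j / γ))) ∧
      g (k+1) = g k) ∧
    (¬ Even k →
      f (k+1) = f k ∧
      g (k+1) = (fun j => γ * Real.log (b j) -
        γ * Real.log (∑ i, Real.exp (-C i j / γ) * Real.exp (f k i / γ))))

/-!
After one Sinkhorn step one marginal of the plan is already exact; say the columns sum to `b`, so
the row sums `r` form a probability vector and only the row error `‖r − a‖₁` is nonzero. The next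
step replaces `f` by `f + γ log (a / r)`; both plans have total mass one, so the dual objective
rises by exactly `γ KL(a ‖ r)`, and Pinsker's inequality `KL(a ‖ r) ≥ ‖a − r‖₁² / 2` concludes.
Pinsker follows from Sedrakyan's form of Cauchy–Schwarz and the pointwise bound
`x log (x / y) − x + y ≥ 3 (x − y)² / (2 (x + 2 y))`.
-/

open Real Finset
open scoped Matrix

noncomputable def logGap (t : ℝ) : ℝ :=
  log t - (1 - t⁻¹) - 3 * (t - 1) ^ 2 / (2 * t * (t + 2))

lemma hasDerivAt_logGap {t : ℝ} (ht : 0 < t) :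
    HasDerivAt logGap ((t - 1) ^ 3 / (t ^ 2 * (t + 2) ^ 2)) t := by
  have hx := hasDerivAt_id' t
  have h := ((hasDerivAt_log ht.ne').fun_sub ((hasDerivAt_inv ht.ne').const_sub 1)).fun_sub
    ((((hx.sub_const 1).fun_pow 2).const_mul 3).fun_div ((hx.const_mul 2).fun_mul (hx.add_const 2))
      (by positivity))
  refine h.congr_deriv ?_
  field_simp
  ring

lemma logGap_nonneg {t : ℝ} (ht : 0 < t) : 0 ≤ logGap t := by
  have hderiv (s : ℝ) (hs : 0 < s) := hasDerivAt_logGap hs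
  have hcont : ContinuousOn logGap (Set.Ioi 0) :=
    fun s hs => (hderiv s hs).continuousAt.continuousWithinAt
  have logGap_one : logGap 1 = 0 := by norm_num [logGap]
  rcases le_total t 1 with ht1 | ht1
  · have hanti : AntitoneOn logGap (Set.Icc t 1) := by
      refine antitoneOn_of_hasDerivWithinAt_nonpos (convex_Icc t 1)
        (hcont.mono fun s hs => ht.trans_le hs.1)
        (fun s hs => (hderiv s ?_).hasDerivWithinAt) fun s hs => ?_
      all_goals rw [interior_Icc] at hs
      · exact ht.trans hs.1
      · exact div_nonpos_of_nonpos_of_nonneg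
          (Odd.pow_nonpos (by decide) (by linarith [hs.2])) (by positivity)
    simpa [logGap_one] using hanti ⟨le_rfl, ht1⟩ ⟨ht1, le_rfl⟩ ht1
  · have hmono : MonotoneOn logGap (Set.Icc 1 t) := by
      refine monotoneOn_of_hasDerivWithinAt_nonneg (convex_Icc 1 t)
        (hcont.mono fun s hs => one_pos.trans_le hs.1)
        (fun s hs => (hderiv s ?_).hasDerivWithinAt) fun s hs => ?_
      all_goals rw [interior_Icc] at hs
      · exact one_pos.trans hs.1
      · have : 0 ≤ s - 1 := by linarith [hs.1]
        positivity
    simpa [logGap_one] using hmono ⟨le_rfl, ht1⟩ ⟨ht1, le_rfl⟩ ht1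

lemma three_mul_sq_sub_div_le_mul_log_div {x y : ℝ} (hx : 0 < x) (hy : 0 < y) :
    3 * (x - y) ^ 2 / (2 * (x + 2 * y)) ≤ x * log (x / y) - x + y := by
  have hgap : x * logGap (x / y) =
      x * log (x / y) - x + y - 3 * (x - y) ^ 2 / (2 * (x + 2 * y)) := by
    unfold logGap
    field_simp
    ring
  linarith [mul_nonneg hx.le (logGap_nonneg (div_pos hx hy))]

lemma sq_sum_abs_sub_le_two_mul_sum_mul_log_div {ι : Type*} [Fintype ι] {p q : ι → ℝ}
    (hp : ∀ i, 0 < p i) (hq : ∀ i, 0 < q i) (hp1 : ∑ i, p i = 1) (hq1 : ∑ i, q i = 1) :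
    (∑ i, |p i - q i|) ^ 2 ≤ 2 * ∑ i, p i * log (p i / q i) := by
  set w : ι → ℝ := fun i => 2 * (p i + 2 * q i) / 3
  have hw : ∀ i, 0 < w i := fun i => by have := hp i; have := hq i; positivity
  have hw2 : ∑ i, w i = 2 := by
    simp only [w, ← sum_div, ← mul_sum, sum_add_distrib, hp1, hq1]
    norm_num
  calc (∑ i, |p i - q i|) ^ 2 = 2 * ((∑ i, |p i - q i|) ^ 2 / ∑ i, w i) := by
        rw [hw2]; ring
    _ ≤ 2 * ∑ i, |p i - q i| ^ 2 / w i := by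
        gcongr; exact sq_sum_div_le_sum_sq_div _ _ fun i _ => hw i
    _ ≤ 2 * ∑ i, (p i * log (p i / q i) - p i + q i) := by
        gcongr with i
        calc |p i - q i| ^ 2 / w i = 3 * (p i - q i) ^ 2 / (2 * (p i + 2 * q i)) := by
              rw [sq_abs, div_div_eq_mul_div]; ring
          _ ≤ _ := three_mul_sq_sub_div_le_mul_log_div (hp i) (hq i)
    _ = 2 * ∑ i, p i * log (p i / q i) := by
        rw [sum_add_distrib, sum_sub_distrib, hp1, hq1]; ring

/-- The Sinkhorn update of `f` fitting the row sums of the plan to `a`; the update of `g` fitting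
the column sums to `b` is `rowUpdate b Cᵀ γ f`. -/
noncomputable def rowUpdate {n : ℕ} (a : Fin n → ℝ) (C : Matrix (Fin n) (Fin n) ℝ) (γ : ℝ)
    (g : Fin n → ℝ) : Fin n → ℝ :=
  fun i => γ * log (a i) - γ * log (∑ j, exp (-C i j / γ) * exp (g j / γ))

noncomputable def marginalError {n : ℕ} (a b : Fin n → ℝ) (P : Matrix (Fin n) (Fin n) ℝ) : ℝ :=
  (∑ i, |(∑ j, P i j) - a i|) + ∑ j, |(∑ i, P i j) - b j|

section Sinkhorn

variable {n : ℕ} {a b : Fin n → ℝ} {C : Matrix (Fin n) (Fin n) ℝ} {γ : ℝ} {f g : Fin n → ℝ}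

lemma SinkhornSeq.succ_of_even {f g : ℕ → Fin n → ℝ} (h : SinkhornSeq a b C γ f g) {k : ℕ}
    (hk : Even k) : f (k + 1) = rowUpdate a C γ (g k) ∧ g (k + 1) = g k :=
  (h k).1 hk

lemma SinkhornSeq.succ_of_odd {f g : ℕ → Fin n → ℝ} (h : SinkhornSeq a b C γ f g) {k : ℕ}
    (hk : Odd k) : f (k + 1) = f k ∧ g (k + 1) = rowUpdate b Cᵀ γ (f k) :=
  (h k).2 (Nat.not_even_iff_odd.2 hk)

lemma marginalError_transpose (P : Matrix (Fin n) (Fin n) ℝ) :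
    marginalError b a Pᵀ = marginalError a b P :=
  add_comm _ _

lemma plan_transpose : plan Cᵀ γ g f = (plan C γ f g)ᵀ := by
  ext i j
  simp only [plan, Matrix.transpose_apply]
  ring

lemma dualObj_transpose : dualObj b a Cᵀ γ g f = dualObj a b C γ f g := by
  simp only [dualObj, Matrix.transpose_apply, add_comm (g _)]
  rw [sum_comm]
  ring

lemma plan_pos (i j : Fin n) : 0 < plan C γ f g i j := by
  unfold plan; positivity

lemma dualObj_eq_sum_plan (hγ : γ ≠ 0) :
    dualObj a b C γ f g =
      ∑ i, f i * a i + ∑ j, g j * b j - γ * ∑ i, ∑ j, plan C γ f g i j := by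
  have hexp (i j : Fin n) : exp ((f i + g j - C i j) / γ) = plan C γ f g i j := by
    simp only [plan, ← exp_add]
    congr 1
    field_simp
    ring
  simp only [dualObj, hexp]

lemma sum_exp_mul_exp_pos (i : Fin n) : 0 < ∑ j, exp (-C i j / γ) * exp (g j / γ) :=
  sum_pos (fun j _ => by positivity) ⟨i, mem_univ i⟩

lemma sum_plan_eq_exp_mul (i : Fin n) :
    ∑ j, plan C γ f g i j = exp (f i / γ) * ∑ j, exp (-C i j / γ) * exp (g j / γ) := by
  simp only [plan, mul_sum, mul_assoc]

lemma rowUpdate_sub (hγ : γ ≠ 0) {i : Fin n} (ha : 0 < a i) :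
    rowUpdate a C γ g i - f i = γ * log (a i / ∑ j, plan C γ f g i j) := by
  have hs := sum_exp_mul_exp_pos (C := C) (γ := γ) (g := g) i
  rw [sum_plan_eq_exp_mul, log_div ha.ne' (by positivity), log_mul (exp_pos _).ne' hs.ne', log_exp,
    rowUpdate]
  field_simp
  ring

lemma sum_plan_rowUpdate (hγ : γ ≠ 0) {i : Fin n} (ha : 0 < a i) :
    ∑ j, plan C γ (rowUpdate a C γ g) g i j = a i := by
  have hexp : exp (rowUpdate a C γ g i / γ) = a i / ∑ j, exp (-C i j / γ) * exp (g j / γ) := by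
    rw [rowUpdate, mul_comm γ, mul_comm γ, ← sub_mul, mul_div_assoc, div_self hγ, mul_one,
      exp_sub, exp_log ha, exp_log (sum_exp_mul_exp_pos i)]
  rw [sum_plan_eq_exp_mul, hexp, div_mul_cancel₀ _ (sum_exp_mul_exp_pos i).ne']

lemma dualObj_rowUpdate_sub (hγ : γ ≠ 0) (ha : ∀ i, 0 < a i) :
    dualObj a b C γ (rowUpdate a C γ g) g - dualObj a b C γ f g =
      γ * ∑ i, a i * log (a i / ∑ j, plan C γ f g i j) -
        γ * (∑ i, a i - ∑ i, ∑ j, plan C γ f g i j) := by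
  have hlin : ∑ i, rowUpdate a C γ g i * a i - ∑ i, f i * a i =
      γ * ∑ i, a i * log (a i / ∑ j, plan C γ f g i j) := by
    rw [← sum_sub_distrib, mul_sum]
    refine sum_congr rfl fun i _ => ?_
    rw [← sub_mul, rowUpdate_sub hγ (ha i)]
    ring
  simp only [dualObj_eq_sum_plan hγ, sum_plan_rowUpdate hγ (ha _)]
  linarith

lemma mul_sq_marginalError_le_dualObj_rowUpdate_sub (hγ : 0 < γ) (ha : ∀ i, 0 < a i)
    (ha1 : ∑ i, a i = 1) (hb1 : ∑ j, b j = 1) (hcol : ∀ j, ∑ i, plan C γ f g i j = b j) :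
    γ / 2 * marginalError a b (plan C γ f g) ^ 2 ≤
      dualObj a b C γ (rowUpdate a C γ g) g - dualObj a b C γ f g := by
  have hmass : ∑ i, ∑ j, plan C γ f g i j = 1 := by
    rw [sum_comm (f := fun i j => plan C γ f g i j)]; simp only [hcol, hb1]
  have hpinsker := sq_sum_abs_sub_le_two_mul_sum_mul_log_div ha
    (fun i => sum_pos (fun j _ => plan_pos i j) ⟨i, mem_univ i⟩) ha1 hmass
  have hcol_err : ∑ j, |(∑ i, plan C γ f g i j) - b j| = 0 := by
    simp only [hcol, sub_self, abs_zero, sum_const_zero]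
  rw [dualObj_rowUpdate_sub hγ.ne' ha, ha1, hmass, sub_self, mul_zero, sub_zero, marginalError,
    hcol_err, add_zero]
  simp only [abs_sub_comm _ (a _)]
  linarith [mul_le_mul_of_nonneg_left hpinsker (half_pos hγ).le]

lemma mul_sq_marginalError_le_dualObj_rowUpdate_transpose_sub (hγ : 0 < γ) (hb : ∀ j, 0 < b j)
    (ha1 : ∑ i, a i = 1) (hb1 : ∑ j, b j = 1) (hrow : ∀ i, ∑ j, plan C γ f g i j = a i) :
    γ / 2 * marginalError a b (plan C γ f g) ^ 2 ≤
      dualObj a b C γ f (rowUpdate b Cᵀ γ f) - dualObj a b C γ f g := by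
  have h := mul_sq_marginalError_le_dualObj_rowUpdate_sub (C := Cᵀ) (f := g) (g := f)
    hγ hb hb1 ha1 (by simpa only [plan_transpose, Matrix.transpose_apply] using hrow)
  rwa [plan_transpose, marginalError_transpose, dualObj_transpose, dualObj_transpose] at h

lemma sum_plan_rowUpdate_transpose (hγ : γ ≠ 0) {j : Fin n} (hb : 0 < b j) :
    ∑ i, plan C γ f (rowUpdate b Cᵀ γ f) i j = b j := by
  simpa only [plan_transpose, Matrix.transpose_apply] using
    sum_plan_rowUpdate (C := Cᵀ) (g := f) hγ hb

end Sinkhorn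

theorem sinkhorn_one_step_improvement_general {n : ℕ} (a b : Fin n → ℝ)
    (C : Matrix (Fin n) (Fin n) ℝ) (γ : ℝ) (hγ : 0 < γ)
    (ha0 : ∀ i, 0 < a i) (hb0 : ∀ j, 0 < b j)
    (ha1 : ∑ i, a i = 1) (hb1 : ∑ j, b j = 1)
    (f g : ℕ → Fin n → ℝ) (hiter : SinkhornSeq a b C γ f g)
    (k : ℕ) (hk : 2 ≤ k) :
    γ / 2 * ((∑ i, |(∑ j, plan C γ (f k) (g k) i j) - a i|) +
        (∑ j, |(∑ i, plan C γ (f k) (g k) i j) - b j|)) ^ 2 ≤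
      dualObj a b C γ (f (k+1)) (g (k+1)) - dualObj a b C γ (f k) (g k) := by
  obtain ⟨m, rfl⟩ : ∃ m, k = m + 1 := ⟨k - 1, by omega⟩
  rcases Nat.even_or_odd m with hm | hm
  · obtain ⟨hf, hg⟩ := hiter.succ_of_even hm
    obtain ⟨hf', hg'⟩ := hiter.succ_of_odd hm.add_one
    rw [hf', hg']
    refine mul_sq_marginalError_le_dualObj_rowUpdate_transpose_sub hγ hb0 ha1 hb1 fun i => ?_
    rw [hf, hg]
    exact sum_plan_rowUpdate hγ.ne' (ha0 i)
  · obtain ⟨hf, hg⟩ := hiter.succ_of_odd hm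
    obtain ⟨hf', hg'⟩ := hiter.succ_of_even hm.add_one
    rw [hf', hg']
    refine mul_sq_marginalError_le_dualObj_rowUpdate_sub hγ ha0 ha1 hb1 fun j => ?_
    rw [hf, hg]
    exact sum_plan_rowUpdate_transpose hγ.ne' (hb0 j)

/-- **One-iteration improvement of Sinkhorn** (Lemma 2 of Altschuler–Weed–Rigollet):
for `k ≥ 2`,
`h(f_{k+1},g_{k+1}) − h(f_k,g_k) ≥ (γ/2)(‖P_k𝟏 − a‖₁ + ‖P_kᵀ𝟏 − b‖₁)²`. -/
theorem sinkhorn_one_step_improvement {n : ℕ} (a b : Fin n → ℝ)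
    (C : Matrix (Fin n) (Fin n) ℝ) (γ : ℝ) (hγ : 0 < γ)
    (ha0 : ∀ i, 0 < a i) (hb0 : ∀ j, 0 < b j)
    (ha1 : ∑ i, a i = 1) (hb1 : ∑ j, b j = 1)
    (hC : ∀ i j, 0 ≤ C i j)
    (f g : ℕ → Fin n → ℝ) (hiter : SinkhornSeq a b C γ f g)
    (k : ℕ) (hk : 2 ≤ k) :
    γ / 2 * ((∑ i, |(∑ j, plan C γ (f k) (g k) i j) - a i|) +
        (∑ j, |(∑ i, plan C γ (f k) (g k) i j) - b j|)) ^ 2 ≤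
      dualObj a b C γ (f (k+1)) (g (k+1)) - dualObj a b C γ (f k) (g k) :=
  sinkhorn_one_step_improvement_general a b C γ hγ ha0 hb0 ha1 hb1 f g hiter k hk
end

section
/- Let a, b ∈ ℝ_{++}ⁿ be strictly positive probability vectors, C ∈ ℝ₊^{n×n}, γ > 0. For any f ∈ ℝⁿ, let f^{(C,γ)} ∈ ℝⁿ be its (C,γ)-transform, i.e. f^{(C,γ)}_j = γ log b_j − γ log Σ_{i=1}^n exp((f_i − C_{ij})/γ) for each j. Then max_j (f^{(C,γ)}_j − γ log b_j) − min_j (f^{(C,γ)}_j − γ log b_j) ≤ max_{i,j} C_{ij} − min_{i,j} C_{ij} ≤ ‖C‖_∞. -/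
/-!
Writing `S_j = Σ_i exp((f_i − C_{ij})/γ)`, the shifted transform is `F_j − γ log b_j = −γ log S_j`.
Since `t ↦ γ log Σ_i exp(t_i/γ)` is monotone and commutes with adding constants, it is
1-Lipschitz for the sup-norm; moving from column `j` to column `k` of `C` changes each
argument by `C_{ij} − C_{ik} ≤ max C − min C`, which bounds the oscillation of `j ↦ γ log S_j`.
-/

open Real

noncomputable def softMax {ι : Type*} [Fintype ι] (γ : ℝ) (x : ι → ℝ) : ℝ :=
  γ * log (∑ i, exp (x i / γ))

theorem softMax_le_softMax_add {ι : Type*} [Fintype ι] [Nonempty ι] {γ M : ℝ} (hγ : 0 < γ)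
    {x y : ι → ℝ} (h : ∀ i, x i ≤ y i + M) : softMax γ x ≤ softMax γ y + M := by
  have hpos : 0 < ∑ i, exp (y i / γ) := Finset.sum_pos (fun _ _ ↦ exp_pos _) Finset.univ_nonempty
  have hsum : ∑ i, exp (x i / γ) ≤ exp (M / γ) * ∑ i, exp (y i / γ) := by
    rw [Finset.mul_sum]
    refine Finset.sum_le_sum fun i _ ↦ ?_
    rw [← exp_add, exp_le_exp, ← add_div]
    exact div_le_div_of_nonneg_right (by linarith [h i]) hγ.le
  have hlog : log (∑ i, exp (x i / γ)) ≤ M / γ + log (∑ i, exp (y i / γ)) := by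
    calc log (∑ i, exp (x i / γ)) ≤ log (exp (M / γ) * ∑ i, exp (y i / γ)) :=
          log_le_log (Finset.sum_pos (fun _ _ ↦ exp_pos _) Finset.univ_nonempty) hsum
      _ = M / γ + log (∑ i, exp (y i / γ)) := by
          rw [log_mul (exp_ne_zero _) hpos.ne', log_exp]
  calc softMax γ x ≤ γ * (M / γ + log (∑ i, exp (y i / γ))) :=
        mul_le_mul_of_nonneg_left hlog hγ.le
    _ = softMax γ y + M := by rw [softMax, mul_add, mul_div_cancel₀ _ hγ.ne']; ring

theorem ciSup_sub_ciInf_le_of_forall_le_add {ι : Type*} [Finite ι] [Nonempty ι] {g : ι → ℝ}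
    {M : ℝ} (h : ∀ j k, g j ≤ g k + M) : (⨆ j, g j) - ⨅ j, g j ≤ M := by
  obtain ⟨j, hj⟩ := exists_eq_ciSup_of_finite (f := g)
  obtain ⟨k, hk⟩ := exists_eq_ciInf_of_finite (f := g)
  linarith [h j k]

section DoubleIndexed

variable {ι κ : Type*} [Finite ι] [Finite κ]

theorem le_ciSup_ciSup (C : ι → κ → ℝ) (i : ι) (j : κ) : C i j ≤ ⨆ i, ⨆ j, C i j :=
  le_ciSup_of_le (Set.finite_range _).bddAbove i (le_ciSup (Set.finite_range _).bddAbove j)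

theorem ciInf_ciInf_le (C : ι → κ → ℝ) (i : ι) (j : κ) : ⨅ i, ⨅ j, C i j ≤ C i j :=
  ciInf_le_of_le (Set.finite_range _).bddBelow i (ciInf_le (Set.finite_range _).bddBelow j)

theorem ciSup_ciSup_sub_ciInf_ciInf_le_ciSup_ciSup_abs {C : ι → κ → ℝ} (hC : ∀ i j, 0 ≤ C i j) :
    (⨆ i, ⨆ j, C i j) - (⨅ i, ⨅ j, C i j) ≤ ⨆ i, ⨆ j, |C i j| := by
  have hinf : 0 ≤ ⨅ i, ⨅ j, C i j := Real.iInf_nonneg fun i ↦ Real.iInf_nonneg (hC i)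
  have hsup : (⨆ i, ⨆ j, C i j) ≤ ⨆ i, ⨆ j, |C i j| :=
    ciSup_mono (Set.finite_range _).bddAbove fun i ↦
      ciSup_mono (Set.finite_range _).bddAbove fun j ↦ le_abs_self (C i j)
  linarith

end DoubleIndexed

theorem c_transform_equicontinuity_general {n : ℕ} (hn : 0 < n)
    (b : Fin n → ℝ) (C : Matrix (Fin n) (Fin n) ℝ) (γ : ℝ) (hγ : 0 < γ)
    (hC : ∀ i j, 0 ≤ C i j)
    (f F : Fin n → ℝ)
    (hF : ∀ j, F j = γ * Real.log (b j) -
      γ * Real.log (∑ i, Real.exp ((f i - C i j) / γ))) :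
    (⨆ j, (F j - γ * Real.log (b j))) - (⨅ j, (F j - γ * Real.log (b j))) ≤
        (⨆ i, ⨆ j, C i j) - (⨅ i, ⨅ j, C i j) ∧
      (⨆ i, ⨆ j, C i j) - (⨅ i, ⨅ j, C i j) ≤ ⨆ i, ⨆ j, |C i j| := by
  have : Nonempty (Fin n) := Fin.pos_iff_nonempty.mp hn
  have hshift : ∀ j, F j - γ * log (b j) = -softMax γ (fun i ↦ f i - C i j) := by
    intro j
    rw [hF j, softMax]
    ring
  simp_rw [hshift]
  refine ⟨ciSup_sub_ciInf_le_of_forall_le_add fun j k ↦ ?_,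
    ciSup_ciSup_sub_ciInf_ciInf_le_ciSup_ciSup_abs hC⟩
  have := softMax_le_softMax_add hγ fun i ↦
    show f i - C i k ≤ f i - C i j + ((⨆ i, ⨆ j, C i j) - ⨅ i, ⨅ j, C i j) by
      linarith [le_ciSup_ciSup C i j, ciInf_ciInf_le C i k]
  linarith

/-- **Equicontinuity of the (C,γ)-transform** (Lemma 4 of the paper).
For strictly positive probability vectors `a, b`, `C ≥ 0`, `γ > 0` and any `f`,
the `(C,γ)`-transform `F_j = γ log b_j − γ log Σ_i exp((f_i − C_{ij})/γ)` satisfies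
`max_j(F_j − γ log b_j) − min_j(F_j − γ log b_j) ≤ max C − min C ≤ ‖C‖_∞`. -/
theorem c_transform_equicontinuity {n : ℕ} (hn : 0 < n)
    (a b : Fin n → ℝ) (C : Matrix (Fin n) (Fin n) ℝ) (γ : ℝ) (hγ : 0 < γ)
    (ha0 : ∀ i, 0 < a i) (hb0 : ∀ j, 0 < b j)
    (ha1 : ∑ i, a i = 1) (hb1 : ∑ j, b j = 1)
    (hC : ∀ i j, 0 ≤ C i j)
    (f F : Fin n → ℝ)
    (hF : ∀ j, F j = γ * Real.log (b j) -
      γ * Real.log (∑ i, Real.exp ((f i - C i j) / γ))) :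
    (⨆ j, (F j - γ * Real.log (b j))) - (⨅ j, (F j - γ * Real.log (b j))) ≤
        (⨆ i, ⨆ j, C i j) - (⨅ i, ⨅ j, C i j) ∧
      (⨆ i, ⨆ j, C i j) - (⨅ i, ⨅ j, C i j) ≤ ⨆ i, ⨆ j, |C i j| :=
  c_transform_equicontinuity_general hn b C γ hγ hC f F hF
end

section
/- Let a, b ∈ ℝ_{++}ⁿ be strictly positive probability vectors, C ∈ ℝ₊^{n×n}, γ > 0, K := exp(−C/γ). Fix f, g ∈ ℝⁿ and an index I ∈ {1,…,n}, let P := diag(e^{f/γ}) K diag(e^{g/γ}), and define f' ∈ ℝⁿ by f'_I = γ log a_I − γ log (K e^{g/γ})_I and f'_i = f_i for i ≠ I. Then h(f', g) − h(f, g) = γ ρ(a_I, (P𝟏ₙ)_I), where ρ(x,y) := y − x + x log(x/y). -/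
/-- The scalar Bregman divergence `ρ(x,y) = y − x + x log(x/y)`. -/
noncomputable def rho (x y : ℝ) : ℝ := y - x + x * Real.log (x / y)

/-!
Only the `I`-th row of the double sum in `h` involves `f_I`, and that row equals
`f_I a_I − γ (P𝟏)_I` with `(P𝟏)_I = e^{f_I/γ} (K e^{g/γ})_I`. The update is chosen so that the
new row sum is exactly `a_I`, and the increment of `f_I` equals `γ log (a_I / (P𝟏)_I)`;
substituting both gives `γ ρ(a_I, (P𝟏)_I)`.
-/

open Real Finset

/-- The `i`-th entry of `K e^{g/γ}`, where `K = exp(−C/γ)`. -/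
noncomputable def kernelApply {n : ℕ} (C : Matrix (Fin n) (Fin n) ℝ) (γ : ℝ)
    (g : Fin n → ℝ) (i : Fin n) : ℝ :=
  ∑ j, exp (-C i j / γ) * exp (g j / γ)

section

variable {n : ℕ} (C : Matrix (Fin n) (Fin n) ℝ) (γ : ℝ) (g : Fin n → ℝ)

theorem kernelApply_pos (i : Fin n) : 0 < kernelApply C γ g i :=
  sum_pos (fun j _ => by positivity) ⟨i, mem_univ i⟩

theorem sum_plan_row (f : Fin n → ℝ) (i : Fin n) :
    ∑ j, plan C γ f g i j = exp (f i / γ) * kernelApply C γ g i := by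
  rw [kernelApply, mul_sum]
  exact sum_congr rfl fun j _ => mul_assoc _ _ _

theorem dualObj_eq_sum_rows (a b f : Fin n → ℝ) :
    dualObj a b C γ f g =
      ∑ i, (f i * a i - γ * (exp (f i / γ) * kernelApply C γ g i)) + ∑ j, g j * b j := by
  have row_sum (i : Fin n) :
      ∑ j, exp ((f i + g j - C i j) / γ) = exp (f i / γ) * kernelApply C γ g i := by
    rw [← sum_plan_row]
    refine sum_congr rfl fun j _ => ?_
    rw [plan, ← exp_add, ← exp_add]
    ring_nf
  simp only [dualObj, row_sum, sum_sub_distrib, ← mul_sum]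
  ring

end

theorem Fintype.sum_update_sub_sum {ι α M : Type*} [Fintype ι] [DecidableEq ι] [AddCommGroup M]
    (φ : ι → α → M) (f : ι → α) (I : ι) (v : α) :
    ∑ i, φ i (Function.update f I v i) - ∑ i, φ i (f i) = φ I v - φ I (f I) := by
  rw [← sum_sub_distrib, Fintype.sum_eq_single I fun i hi => by simp [hi]]
  simp

theorem row_gain_eq_mul_rho {γ a S : ℝ} (hγ : γ ≠ 0) (ha : 0 < a) (hS : 0 < S) (x : ℝ) :
    ((γ * log a - γ * log S) * a - γ * (exp ((γ * log a - γ * log S) / γ) * S)) -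
        (x * a - γ * (exp (x / γ) * S)) =
      γ * rho a (exp (x / γ) * S) := by
  have new_row_sum : exp ((γ * log a - γ * log S) / γ) * S = a := by
    rw [show (γ * log a - γ * log S) / γ = log a - log S by field_simp, exp_sub,
      exp_log ha, exp_log hS, div_mul_cancel₀ _ hS.ne']
  have log_ratio : log (a / (exp (x / γ) * S)) = log a - x / γ - log S := by
    rw [log_div ha.ne' (by positivity), log_mul (exp_ne_zero _) hS.ne', log_exp]
    ring
  rw [new_row_sum, rho, log_ratio]
  field_simp
  ring

theorem greenkhorn_single_update_value_general {n : ℕ} (a b : Fin n → ℝ)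
    (C : Matrix (Fin n) (Fin n) ℝ) (γ : ℝ) (hγ : 0 < γ)
    (ha0 : ∀ i, 0 < a i)
    (f g : Fin n → ℝ) (I : Fin n) (f' : Fin n → ℝ)
    (hf' : f' = Function.update f I (γ * Real.log (a I) -
      γ * Real.log (∑ j, Real.exp (-C I j / γ) * Real.exp (g j / γ)))) :
    dualObj a b C γ f' g - dualObj a b C γ f g =
      γ * rho (a I) (∑ j, plan C γ f g I j) := by
  subst hf'
  rw [dualObj_eq_sum_rows, dualObj_eq_sum_rows, add_sub_add_right_eq_sub,
    Fintype.sum_update_sub_sum (fun i x => x * a i - γ * (exp (x / γ) * kernelApply C γ g i)),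
    sum_plan_row]
  exact row_gain_eq_mul_rho hγ.ne' (ha0 I) (kernelApply_pos C γ g I) (f I)

/-- **Value change of a single Greenkhorn-type coordinate update**: updating the
single coordinate `f_I` to `γ log a_I − γ log (K e^{g/γ})_I` changes the dual
objective by exactly `γ ρ(a_I, (P𝟏)_I)`. -/
theorem greenkhorn_single_update_value {n : ℕ} (a b : Fin n → ℝ)
    (C : Matrix (Fin n) (Fin n) ℝ) (γ : ℝ) (hγ : 0 < γ)
    (ha0 : ∀ i, 0 < a i) (hb0 : ∀ j, 0 < b j)
    (ha1 : ∑ i, a i = 1) (hb1 : ∑ j, b j = 1)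
    (hC : ∀ i j, 0 ≤ C i j)
    (f g : Fin n → ℝ) (I : Fin n) (f' : Fin n → ℝ)
    (hf' : f' = Function.update f I (γ * Real.log (a I) -
      γ * Real.log (∑ j, Real.exp (-C I j / γ) * Real.exp (g j / γ)))) :
    dualObj a b C γ f' g - dualObj a b C γ f g =
      γ * rho (a I) (∑ j, plan C γ f g I j) :=
  greenkhorn_single_update_value_general a b C γ hγ ha0 f g I f' hf'
end

section
/- Let a, b ∈ ℝ_{++}ⁿ be strictly positive probability vectors, C ∈ ℝ₊^{n×n}, γ > 0, K := exp(−C/γ). Let (f_k, g_k, P_k) be a Greenkhorn step: P_k := diag(e^{f_k/γ}) K diag(e^{g_k/γ}), I maximizes i ↦ ρ(a_i, (P_k𝟏ₙ)_i), J maximizes j ↦ ρ(b_j, (P_kᵀ𝟏ₙ)_j), and (f_{k+1}, g_{k+1}) is obtained by updating the single coordinate f_I to γ log a_I − γ log(K e^{g_k/γ})_I if ρ(a_I,(P_k𝟏ₙ)_I) > ρ(b_J,(P_kᵀ𝟏ₙ)_J), and otherwise updating g_J to γ log b_J − γ log(Kᵀ e^{f_k/γ})_J. If max(Σ_{i=1}^n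 ρ(a_i, (P_k𝟏ₙ)_i), Σ_{j=1}^n ρ(b_j, (P_kᵀ𝟏ₙ)_j)) ≤ 1, then h(f_{k+1}, g_{k+1}) − h(f_k, g_k) ≥ (γ/(28n)) (‖a − P_k𝟏ₙ‖₁ + ‖b − P_kᵀ𝟏ₙ‖₁)². -/
/-- Padé-type bound: `log x ≤ (x-1)(x+5)/(4x+2)` for `x > 0`. -/
lemma log_le_pade {x : ℝ} (hx : 0 < x) :
    Real.log x ≤ (x - 1) * (x + 5) / (4 * x + 2) := by
  set D : ℝ → ℝ := fun t => (t - 1) * (t + 5) / (4 * t + 2) - Real.log t with hD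
  have hder : ∀ t : ℝ, 0 < t →
      HasDerivAt D ((2*t+4) / (4*t+2) - (t-1)*(t+5)*4/(4*t+2)^2 - 1/t) t := by
    intro t ht
    have h1 : HasDerivAt (fun t : ℝ => (t - 1) * (t + 5)) (1*(t+5) + (t-1)*1) t :=
      ((hasDerivAt_id t).sub_const 1).mul ((hasDerivAt_id t).add_const 5)
    have h2 : HasDerivAt (fun t : ℝ => 4 * t + 2) 4 t := by
      simpa using ((hasDerivAt_id t).const_mul 4).add_const 2
    have hne : (4 * t + 2) ≠ 0 := by nlinarith
    have h3 := h1.div h2 hne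
    have h4 := h3.sub (Real.hasDerivAt_log (ne_of_gt ht))
    exact h4.congr_deriv (by field_simp; ring)
  have key : ∀ t : ℝ, 0 < t → deriv D t = 4*(t-1)^3 / (t * (4*t+2)^2) := by
    intro t ht
    rw [(hder t ht).deriv]
    have h1 : (4*t+2) ≠ 0 := by nlinarith
    have h2 : t ≠ 0 := ne_of_gt ht
    field_simp
    ring
  have hcont : ∀ t : ℝ, 0 < t → ContinuousAt D t := fun t ht => (hder t ht).continuousAt
  have hD1 : D 1 = 0 := by simp [hD]
  have hgoal : 0 ≤ D x → Real.log x ≤ (x - 1) * (x + 5) / (4 * x + 2) := by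
    intro h; simp only [hD, sub_nonneg] at h; exact h
  apply hgoal
  rcases le_or_gt 1 x with h | h
  · have hmono : MonotoneOn D (Set.Ici 1) := by
      apply monotoneOn_of_deriv_nonneg (convex_Ici 1)
      · exact fun t ht => (hcont t (lt_of_lt_of_le one_pos ht)).continuousWithinAt
      · intro t ht
        rw [interior_Ici] at ht
        exact ((hder t (lt_trans one_pos ht)).differentiableAt).differentiableWithinAt
      · intro t ht
        rw [interior_Ici] at ht
        have h1 : (0:ℝ) < t := lt_trans one_pos ht
        rw [key t h1]
        have h2 : (0:ℝ) ≤ (t-1)^3 := pow_nonneg (by linarith [Set.mem_Ioi.mp ht]) 3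
        have h3 : (0:ℝ) < t * (4*t+2)^2 := mul_pos h1 (pow_pos (by linarith) 2)
        exact div_nonneg (by linarith) (le_of_lt h3)
    calc (0:ℝ) = D 1 := hD1.symm
    _ ≤ D x := hmono (by simp) (by simpa using h) h
  · have hanti : AntitoneOn D (Set.Ioc 0 1) := by
      apply antitoneOn_of_deriv_nonpos (convex_Ioc 0 1)
      · exact fun t ht => (hcont t ht.1).continuousWithinAt
      · intro t ht
        rw [interior_Ioc] at ht
        exact ((hder t ht.1).differentiableAt).differentiableWithinAt
      · intro t ht
        rw [interior_Ioc] at ht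
        rw [key t ht.1]
        have h2 : (t-1)^3 ≤ 0 := by nlinarith [mul_nonneg (by linarith [ht.2] : (0:ℝ) ≤ 1 - t) (sq_nonneg (t-1))]
        have h3 : (0:ℝ) < t * (4*t+2)^2 := mul_pos ht.1 (pow_pos (by linarith [ht.1]) 2)
        exact div_nonpos_of_nonpos_of_nonneg (by linarith) (le_of_lt h3)
    calc (0:ℝ) = D 1 := hD1.symm
    _ ≤ D x := hanti (by constructor <;> [exact hx; exact le_of_lt h]) (by simp) (le_of_lt h)

lemma hellinger_le_rho {x y : ℝ} (hx : 0 < x) (hy : 0 < y) :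
    (Real.sqrt x - Real.sqrt y) ^ 2 ≤ rho x y := by
  have hsx : (0:ℝ) < Real.sqrt x := Real.sqrt_pos.2 hx
  have hsy : (0:ℝ) < Real.sqrt y := Real.sqrt_pos.2 hy
  have h1 : Real.log (Real.sqrt y / Real.sqrt x) ≤ Real.sqrt y / Real.sqrt x - 1 :=
    Real.log_le_sub_one_of_pos (by positivity)
  have h2 : Real.log (x / y) = - (2 * Real.log (Real.sqrt y / Real.sqrt x)) := by
    rw [Real.log_div (ne_of_gt hsy) (ne_of_gt hsx), Real.log_sqrt (le_of_lt hy),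
      Real.log_sqrt (le_of_lt hx), Real.log_div (ne_of_gt hx) (ne_of_gt hy)]
    ring
  have h3 : x * Real.log (x / y) ≥ x * (2 - 2 * (Real.sqrt y / Real.sqrt x)) := by
    rw [h2]
    have := mul_le_mul_of_nonneg_left h1 (le_of_lt hx)
    nlinarith
  have h4 : x * (Real.sqrt y / Real.sqrt x) = Real.sqrt x * Real.sqrt y := by
    rw [← Real.mul_self_sqrt (le_of_lt hx)]
    field_simp
    rw [Real.sqrt_sq hsx.le]
  have hxx : Real.sqrt x * Real.sqrt x = x := Real.mul_self_sqrt (le_of_lt hx)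
  have hyy : Real.sqrt y * Real.sqrt y = y := Real.mul_self_sqrt (le_of_lt hy)
  unfold rho
  nlinarith [h3, h4]

/-- Quadratic-over-linear bound: `3(x−y)² ≤ (2x+4y)·ρ(x,y)`. -/

lemma sq_le_rho_mul {x y : ℝ} (hx : 0 < x) (hy : 0 < y) :
    3 * (x - y) ^ 2 ≤ (2 * x + 4 * y) * rho x y := by
  have hu : 0 < y / x := by positivity
  have h1 := log_le_pade hu
  have h2 : Real.log (x / y) = - Real.log (y / x) := by
    rw [Real.log_div (ne_of_gt hx) (ne_of_gt hy), Real.log_div (ne_of_gt hy) (ne_of_gt hx)]; ring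
  have h3 : (y/x - 1) * (y/x + 5) / (4 * (y/x) + 2) = (y - x) * (y + 5*x) / (x * (4*y + 2*x)) := by
    field_simp
  have h4 : x * Real.log (x/y) ≥ - (x * ((y - x) * (y + 5*x) / (x * (4*y + 2*x)))) := by
    rw [h2]
    have h1' := mul_le_mul_of_nonneg_left h1 (le_of_lt hx)
    rw [h3] at h1'
    linarith
  have h5 : x * ((y - x) * (y + 5*x) / (x * (4*y + 2*x))) = (y - x) * (y + 5*x) / (4*y + 2*x) := by
    field_simp
  have h6 : (0:ℝ) < 4*y + 2*x := by linarith
  unfold rho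
  have h7 : rho x y ≥ y - x - (y - x) * (y + 5*x) / (4*y + 2*x) := by
    unfold rho; rw [h5] at h4; linarith
  have h8 : (2*x + 4*y) * (y - x - (y - x) * (y + 5*x) / (4*y + 2*x)) = 3 * (x - y)^2 := by
    field_simp
    ring
  nlinarith [h7, h8, mul_le_mul_of_nonneg_left h7 (by linarith : (0:ℝ) ≤ 2*x + 4*y)]

lemma dual_update_row {n : ℕ} (hn : 0 < n) (a b : Fin n → ℝ) (C : Matrix (Fin n) (Fin n) ℝ)
    (γ : ℝ) (hγ : 0 < γ) (f g : Fin n → ℝ) (I : Fin n) (haI : 0 < a I) :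
    dualObj a b C γ (Function.update f I (γ * Real.log (a I) -
      γ * Real.log (∑ j, Real.exp (-C I j / γ) * Real.exp (g j / γ)))) g
      - dualObj a b C γ f g
    = γ * rho (a I) (∑ j, plan C γ f g I j) := by
  haveI : Nonempty (Fin n) := Fin.pos_iff_nonempty.mp hn
  set L : ℝ := ∑ j, Real.exp (-C I j / γ) * Real.exp (g j / γ) with hLdef
  have hLpos : 0 < L := Finset.sum_pos (fun j _ => by positivity) Finset.univ_nonempty
  set v : ℝ := γ * Real.log (a I) - γ * Real.log L with hvdef
  set f' : Fin n → ℝ := Function.update f I v with hf'def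
  -- linear part
  have hlin : (∑ i, f' i * a i) - (∑ i, f i * a i) = (v - f I) * a I := by
    rw [← Finset.sum_sub_distrib]
    rw [Finset.sum_eq_single I]
    · simp [hf'def]; ring
    · intro i _ hiI
      simp [hf'def, Function.update_of_ne hiI]
    · simp
  -- exponential part
  have hexp : (∑ i, ∑ j, Real.exp ((f' i + g j - C i j) / γ))
      - (∑ i, ∑ j, Real.exp ((f i + g j - C i j) / γ))
      = (∑ j, Real.exp ((v + g j - C I j) / γ)) - ∑ j, Real.exp ((f I + g j - C I j) / γ) := by
    rw [← Finset.sum_sub_distrib]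
    rw [Finset.sum_eq_single I]
    · simp [hf'def]
    · intro i _ hiI
      simp [hf'def, Function.update_of_ne hiI]
    · simp
  -- new row sum equals a I
  have hnew : (∑ j, Real.exp ((v + g j - C I j) / γ)) = a I := by
    have : ∀ j, Real.exp ((v + g j - C I j) / γ)
        = Real.exp (v / γ) * (Real.exp (-C I j / γ) * Real.exp (g j / γ)) := by
      intro j
      rw [← Real.exp_add, ← Real.exp_add]
      congr 1
      field_simp
      ring
    rw [Finset.sum_congr rfl (fun j _ => this j), ← Finset.mul_sum, ← hLdef]
    have hv : v / γ = Real.log (a I) - Real.log L := by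
      rw [hvdef]; field_simp
    rw [hv, Real.exp_sub, Real.exp_log haI, Real.exp_log hLpos]
    field_simp
  -- old row sum
  have hold : (∑ j, Real.exp ((f I + g j - C I j) / γ)) = ∑ j, plan C γ f g I j := by
    apply Finset.sum_congr rfl
    intro j _
    rw [plan, ← Real.exp_add, ← Real.exp_add]
    congr 1
    field_simp
    ring
  have hrpos : 0 < ∑ j, plan C γ f g I j :=
    Finset.sum_pos (fun j _ => by unfold plan; positivity) Finset.univ_nonempty
  have hrL : ∑ j, plan C γ f g I j = Real.exp (f I / γ) * L := by
    rw [hLdef, Finset.mul_sum]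
    apply Finset.sum_congr rfl
    intro j _
    rw [plan]; ring
  have hexp2 : (∑ i, ∑ j, Real.exp ((f' i + g j - C i j) / γ))
      - (∑ i, ∑ j, Real.exp ((f i + g j - C i j) / γ))
      = a I - ∑ j, plan C γ f g I j := by
    rw [hexp, hnew, hold]
  -- assemble
  have hdual : dualObj a b C γ f' g - dualObj a b C γ f g
      = (v - f I) * a I - γ * (a I - ∑ j, plan C γ f g I j) := by
    unfold dualObj
    linear_combination hlin - γ * hexp2
  rw [hdual]
  have hlogr : Real.log (∑ j, plan C γ f g I j) = f I / γ + Real.log L := by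
    rw [hrL, Real.log_mul (Real.exp_ne_zero _) (ne_of_gt hLpos), Real.log_exp]
  unfold rho
  rw [Real.log_div (ne_of_gt haI) (ne_of_gt hrpos), hlogr, hvdef]
  field_simp
  ring

lemma dual_update_col {n : ℕ} (hn : 0 < n) (a b : Fin n → ℝ) (C : Matrix (Fin n) (Fin n) ℝ)
    (γ : ℝ) (hγ : 0 < γ) (f g : Fin n → ℝ) (J : Fin n) (hbJ : 0 < b J) :
    dualObj a b C γ f (Function.update g J (γ * Real.log (b J) -
      γ * Real.log (∑ i, Real.exp (-C i J / γ) * Real.exp (f i / γ))))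
      - dualObj a b C γ f g
    = γ * rho (b J) (∑ i, plan C γ f g i J) := by
  haveI : Nonempty (Fin n) := Fin.pos_iff_nonempty.mp hn
  set M : ℝ := ∑ i, Real.exp (-C i J / γ) * Real.exp (f i / γ) with hMdef
  have hMpos : 0 < M := Finset.sum_pos (fun i _ => by positivity) Finset.univ_nonempty
  set v : ℝ := γ * Real.log (b J) - γ * Real.log M with hvdef
  set g' : Fin n → ℝ := Function.update g J v with hg'def
  have hlin : (∑ j, g' j * b j) - (∑ j, g j * b j) = (v - g J) * b J := by
    rw [← Finset.sum_sub_distrib, Finset.sum_eq_single J]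
    · simp [hg'def]; ring
    · intro j _ hjJ
      simp [hg'def, Function.update_of_ne hjJ]
    · simp
  have hexp : (∑ i, ∑ j, Real.exp ((f i + g' j - C i j) / γ))
      - (∑ i, ∑ j, Real.exp ((f i + g j - C i j) / γ))
      = (∑ i, Real.exp ((f i + v - C i J) / γ)) - ∑ i, Real.exp ((f i + g J - C i J) / γ) := by
    rw [Finset.sum_comm (f := fun i j => Real.exp ((f i + g' j - C i j) / γ)),
      Finset.sum_comm (f := fun i j => Real.exp ((f i + g j - C i j) / γ)),
      ← Finset.sum_sub_distrib, Finset.sum_eq_single J]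
    · simp [hg'def]
    · intro j _ hjJ
      simp [hg'def, Function.update_of_ne hjJ]
    · simp
  have hnew : (∑ i, Real.exp ((f i + v - C i J) / γ)) = b J := by
    have : ∀ i, Real.exp ((f i + v - C i J) / γ)
        = Real.exp (v / γ) * (Real.exp (-C i J / γ) * Real.exp (f i / γ)) := by
      intro i
      rw [← Real.exp_add, ← Real.exp_add]
      congr 1
      field_simp
      ring
    rw [Finset.sum_congr rfl (fun i _ => this i), ← Finset.mul_sum, ← hMdef]
    have hv : v / γ = Real.log (b J) - Real.log M := by
      rw [hvdef]; field_simp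
    rw [hv, Real.exp_sub, Real.exp_log hbJ, Real.exp_log hMpos]
    field_simp
  have hold : (∑ i, Real.exp ((f i + g J - C i J) / γ)) = ∑ i, plan C γ f g i J := by
    apply Finset.sum_congr rfl
    intro i _
    rw [plan, ← Real.exp_add, ← Real.exp_add]
    congr 1
    field_simp
    ring
  have hrpos : 0 < ∑ i, plan C γ f g i J :=
    Finset.sum_pos (fun i _ => by unfold plan; positivity) Finset.univ_nonempty
  have hrL : ∑ i, plan C γ f g i J = Real.exp (g J / γ) * M := by
    rw [hMdef, Finset.mul_sum]
    apply Finset.sum_congr rfl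
    intro i _
    rw [plan]; ring
  have hexp2 : (∑ i, ∑ j, Real.exp ((f i + g' j - C i j) / γ))
      - (∑ i, ∑ j, Real.exp ((f i + g j - C i j) / γ))
      = b J - ∑ i, plan C γ f g i J := by
    rw [hexp, hnew, hold]
  have hdual : dualObj a b C γ f g' - dualObj a b C γ f g
      = (v - g J) * b J - γ * (b J - ∑ i, plan C γ f g i J) := by
    unfold dualObj
    linear_combination hlin - γ * hexp2
  rw [hdual]
  have hlogr : Real.log (∑ i, plan C γ f g i J) = g J / γ + Real.log M := by
    rw [hrL, Real.log_mul (Real.exp_ne_zero _) (ne_of_gt hMpos), Real.log_exp]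
  unfold rho
  rw [Real.log_div (ne_of_gt hbJ) (ne_of_gt hrpos), hlogr, hvdef]
  field_simp
  ring

lemma l1_sq_le_six {n : ℕ} (a r : Fin n → ℝ) (ha0 : ∀ i, 0 < a i) (hr0 : ∀ i, 0 < r i)
    (ha1 : ∑ i, a i = 1) (hS1 : ∑ i, rho (a i) (r i) ≤ 1) :
    (∑ i, |a i - r i|) ^ 2 ≤ 6 * ∑ i, rho (a i) (r i) := by
  set S := ∑ i, rho (a i) (r i) with hSdef
  have hell : ∀ i, (Real.sqrt (r i) - Real.sqrt (a i)) ^ 2 ≤ rho (a i) (r i) := by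
    intro i
    have := hellinger_le_rho (ha0 i) (hr0 i)
    nlinarith [this]
  have hQ : ∑ i, (Real.sqrt (r i) - Real.sqrt (a i)) ^ 2 ≤ S :=
    Finset.sum_le_sum (fun i _ => hell i)
  have hQnn : 0 ≤ ∑ i, (Real.sqrt (r i) - Real.sqrt (a i)) ^ 2 :=
    Finset.sum_nonneg (fun i _ => sq_nonneg _)
  have hSnn : 0 ≤ S := le_trans hQnn hQ
  -- T := ∑ √a |√r − √a| ≤ 1
  set T := ∑ i, Real.sqrt (a i) * |Real.sqrt (r i) - Real.sqrt (a i)| with hTdef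
  have hTnn : 0 ≤ T := Finset.sum_nonneg (fun i _ => by positivity)
  have hT2 : T ^ 2 ≤ (∑ i, a i) * (∑ i, (Real.sqrt (r i) - Real.sqrt (a i)) ^ 2) := by
    have hcs := Finset.sum_mul_sq_le_sq_mul_sq Finset.univ
      (fun i => Real.sqrt (a i)) (fun i => |Real.sqrt (r i) - Real.sqrt (a i)|)
    have e1 : ∑ i, (Real.sqrt (a i)) ^ 2 = ∑ i, a i :=
      Finset.sum_congr rfl (fun i _ => Real.sq_sqrt (le_of_lt (ha0 i)))
    have e2 : ∑ i, |Real.sqrt (r i) - Real.sqrt (a i)| ^ 2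
        = ∑ i, (Real.sqrt (r i) - Real.sqrt (a i)) ^ 2 :=
      Finset.sum_congr rfl (fun i _ => sq_abs _)
    rw [e1, e2] at hcs
    exact hcs
  have hT1 : T ≤ 1 := by nlinarith [hT2, hQ, hS1, ha1]
  -- R := ∑ r ≤ 4
  have hR : ∑ i, r i ≤ 4 := by
    have hri : ∀ i, r i ≤ a i + 2 * (Real.sqrt (a i) * |Real.sqrt (r i) - Real.sqrt (a i)|)
        + (Real.sqrt (r i) - Real.sqrt (a i)) ^ 2 := by
      intro i
      nlinarith [Real.sq_sqrt (le_of_lt (ha0 i)), Real.sq_sqrt (le_of_lt (hr0 i)),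
        le_abs_self (Real.sqrt (r i) - Real.sqrt (a i)), Real.sqrt_nonneg (a i),
        Real.sqrt_nonneg (r i)]
    have := Finset.sum_le_sum (fun i (_ : i ∈ Finset.univ) => hri i)
    rw [Finset.sum_add_distrib, Finset.sum_add_distrib, ← Finset.mul_sum] at this
    have hQ1 : ∑ i, (Real.sqrt (r i) - Real.sqrt (a i)) ^ 2 ≤ 1 := le_trans hQ hS1
    linarith [this, hT1, hQ1, ha1.le]
  -- Cauchy–Schwarz for the ℓ¹ norm
  have hw : ∀ i, (0:ℝ) < 2 * a i + 4 * r i := fun i => by nlinarith [ha0 i, hr0 i]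
  have hcs2 := Finset.sum_mul_sq_le_sq_mul_sq Finset.univ
    (fun i => |a i - r i| / Real.sqrt (2 * a i + 4 * r i))
    (fun i => Real.sqrt (2 * a i + 4 * r i))
  have e3 : ∑ i, |a i - r i| / Real.sqrt (2 * a i + 4 * r i) * Real.sqrt (2 * a i + 4 * r i)
      = ∑ i, |a i - r i| := by
    apply Finset.sum_congr rfl
    intro i _
    exact div_mul_cancel₀ _ (Real.sqrt_ne_zero'.mpr (hw i))
  have e4 : ∑ i, (|a i - r i| / Real.sqrt (2 * a i + 4 * r i)) ^ 2 ≤ S / 3 := by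
    have : ∀ i, (|a i - r i| / Real.sqrt (2 * a i + 4 * r i)) ^ 2 ≤ rho (a i) (r i) / 3 := by
      intro i
      rw [div_pow, sq_abs, Real.sq_sqrt (le_of_lt (hw i)),
        div_le_div_iff₀ (hw i) (by norm_num : (0:ℝ) < 3)]
      nlinarith [sq_le_rho_mul (ha0 i) (hr0 i)]
    calc ∑ i, (|a i - r i| / Real.sqrt (2 * a i + 4 * r i)) ^ 2
        ≤ ∑ i, rho (a i) (r i) / 3 := Finset.sum_le_sum (fun i _ => this i)
      _ = S / 3 := by rw [← Finset.sum_div]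
  have e5 : ∑ i, (Real.sqrt (2 * a i + 4 * r i)) ^ 2 ≤ 18 := by
    have : ∑ i, (Real.sqrt (2 * a i + 4 * r i)) ^ 2 = 2 * (∑ i, a i) + 4 * ∑ i, r i := by
      rw [Finset.mul_sum, Finset.mul_sum, ← Finset.sum_add_distrib]
      exact Finset.sum_congr rfl (fun i _ => Real.sq_sqrt (le_of_lt (hw i)))
    rw [this, ha1]
    linarith [hR]
  rw [e3] at hcs2
  have hnn2 : (0:ℝ) ≤ ∑ i, (|a i - r i| / Real.sqrt (2 * a i + 4 * r i)) ^ 2 :=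
    Finset.sum_nonneg (fun i _ => sq_nonneg _)
  calc (∑ i, |a i - r i|) ^ 2
      ≤ (∑ i, (|a i - r i| / Real.sqrt (2 * a i + 4 * r i)) ^ 2)
        * ∑ i, (Real.sqrt (2 * a i + 4 * r i)) ^ 2 := hcs2
    _ ≤ (S / 3) * 18 := by
        apply mul_le_mul e4 e5 (Finset.sum_nonneg (fun i _ => sq_nonneg _)) (by linarith [hSnn])
    _ = 6 * S := by ring


lemma final_arith {γ M X nr : ℝ} (hγ : 0 < γ) (hM : 0 ≤ M) (hn : 0 < nr)
    (hX0 : 0 ≤ X) (hX : X ≤ 24 * nr * M) : γ / (28 * nr) * X ≤ γ * M := by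
  have h1 : γ / (28 * nr) * X ≤ γ / (28 * nr) * (24 * nr * M) :=
    mul_le_mul_of_nonneg_left hX (by positivity)
  have h2 : γ / (28 * nr) * (24 * nr * M) = (24 / 28) * (γ * M) := by
    field_simp
  nlinarith [mul_nonneg (le_of_lt hγ) hM]

/-- **One-iteration improvement of Greenkhorn, small-divergence regime**
(Lemma 5/6 of Altschuler–Weed–Rigollet): if
`max(Σ_i ρ(a_i,(P_k𝟏)_i), Σ_j ρ(b_j,(P_kᵀ𝟏)_j)) ≤ 1`, then the Greenkhorn step
satisfies `h(f_{k+1},g_{k+1}) − h(f_k,g_k) ≥ (γ/(28n))(‖a − P_k𝟏‖₁ + ‖b − P_kᵀ𝟏‖₁)²`. -/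
theorem greenkhorn_improvement_small {n : ℕ} (a b : Fin n → ℝ)
    (C : Matrix (Fin n) (Fin n) ℝ) (γ : ℝ) (hγ : 0 < γ)
    (ha0 : ∀ i, 0 < a i) (hb0 : ∀ j, 0 < b j)
    (ha1 : ∑ i, a i = 1) (hb1 : ∑ j, b j = 1)
    (hC : ∀ i j, 0 ≤ C i j)
    (f g f' g' : Fin n → ℝ) (I J : Fin n)
    (hI : ∀ i, rho (a i) (∑ j, plan C γ f g i j) ≤ rho (a I) (∑ j, plan C γ f g I j))
    (hJ : ∀ j, rho (b j) (∑ i, plan C γ f g i j) ≤ rho (b J) (∑ i, plan C γ f g i J))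
    (hupd₁ : rho (b J) (∑ i, plan C γ f g i J) < rho (a I) (∑ j, plan C γ f g I j) →
      f' = Function.update f I (γ * Real.log (a I) -
          γ * Real.log (∑ j, Real.exp (-C I j / γ) * Real.exp (g j / γ))) ∧
      g' = g)
    (hupd₂ : ¬ (rho (b J) (∑ i, plan C γ f g i J) < rho (a I) (∑ j, plan C γ f g I j)) →
      f' = f ∧
      g' = Function.update g J (γ * Real.log (b J) -
          γ * Real.log (∑ i, Real.exp (-C i J / γ) * Real.exp (f i / γ))))
    (hsmall : max (∑ i, rho (a i) (∑ j, plan C γ f g i j))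
        (∑ j, rho (b j) (∑ i, plan C γ f g i j)) ≤ 1) :
    γ / (28 * n) * ((∑ i, |a i - ∑ j, plan C γ f g i j|) +
        (∑ j, |b j - ∑ i, plan C γ f g i j|)) ^ 2 ≤
      dualObj a b C γ f' g' - dualObj a b C γ f g := by
  rcases Nat.eq_zero_or_pos n with hn0 | hn
  · subst hn0
    simp [dualObj]
  haveI : Nonempty (Fin n) := Fin.pos_iff_nonempty.mp hn
  have hnR : (0:ℝ) < (n:ℝ) := Nat.cast_pos.mpr hn
  have hr0 : ∀ i, 0 < ∑ j, plan C γ f g i j :=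
    fun i => Finset.sum_pos (fun j _ => by unfold plan; positivity) Finset.univ_nonempty
  have hc0 : ∀ j, 0 < ∑ i, plan C γ f g i j :=
    fun j => Finset.sum_pos (fun i _ => by unfold plan; positivity) Finset.univ_nonempty
  have hSa1 : (∑ i, rho (a i) (∑ j, plan C γ f g i j)) ≤ 1 :=
    le_trans (le_max_left _ _) hsmall
  have hSb1 : (∑ j, rho (b j) (∑ i, plan C γ f g i j)) ≤ 1 :=
    le_trans (le_max_right _ _) hsmall
  have hA2 := l1_sq_le_six a (fun i => ∑ j, plan C γ f g i j) ha0 hr0 ha1 hSa1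
  have hB2 := l1_sq_le_six b (fun j => ∑ i, plan C γ f g i j) hb0 hc0 hb1 hSb1
  have hSaI : (∑ i, rho (a i) (∑ j, plan C γ f g i j))
      ≤ (n:ℝ) * rho (a I) (∑ j, plan C γ f g I j) := by
    have := Finset.sum_le_card_nsmul Finset.univ
      (fun i => rho (a i) (∑ j, plan C γ f g i j))
      (rho (a I) (∑ j, plan C γ f g I j)) (fun i _ => hI i)
    simpa [nsmul_eq_mul] using this
  have hSbJ : (∑ j, rho (b j) (∑ i, plan C γ f g i j))
      ≤ (n:ℝ) * rho (b J) (∑ i, plan C γ f g i J) := by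
    have := Finset.sum_le_card_nsmul Finset.univ
      (fun j => rho (b j) (∑ i, plan C γ f g i j))
      (rho (b J) (∑ i, plan C γ f g i J)) (fun j _ => hJ j)
    simpa [nsmul_eq_mul] using this
  have hρI0 : 0 ≤ rho (a I) (∑ j, plan C γ f g I j) :=
    le_trans (sq_nonneg _) (hellinger_le_rho (ha0 I) (hr0 I))
  have hρJ0 : 0 ≤ rho (b J) (∑ i, plan C γ f g i J) :=
    le_trans (sq_nonneg _) (hellinger_le_rho (hb0 J) (hc0 J))
  have hsq : ((∑ i, |a i - ∑ j, plan C γ f g i j|) + (∑ j, |b j - ∑ i, plan C γ f g i j|)) ^ 2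
      ≤ 2 * (∑ i, |a i - ∑ j, plan C γ f g i j|) ^ 2
        + 2 * (∑ j, |b j - ∑ i, plan C γ f g i j|) ^ 2 := by
    nlinarith [sq_nonneg ((∑ i, |a i - ∑ j, plan C γ f g i j|)
      - (∑ j, |b j - ∑ i, plan C γ f g i j|))]
  have hX0 : (0:ℝ) ≤ ((∑ i, |a i - ∑ j, plan C γ f g i j|)
      + (∑ j, |b j - ∑ i, plan C γ f g i j|)) ^ 2 := sq_nonneg _
  by_cases hcase : rho (b J) (∑ i, plan C γ f g i J) < rho (a I) (∑ j, plan C γ f g I j)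
  · obtain ⟨hf', hg'⟩ := hupd₁ hcase
    rw [hf', hg', dual_update_row hn a b C γ hγ f g I (ha0 I)]
    apply final_arith hγ hρI0 hnR hX0
    nlinarith [hA2, hB2, hSaI, hSbJ, hsq, hcase.le,
      mul_le_mul_of_nonneg_left hcase.le (le_of_lt hnR)]
  · obtain ⟨hf', hg'⟩ := hupd₂ hcase
    rw [hf', hg', dual_update_col hn a b C γ hγ f g J (hb0 J)]
    apply final_arith hγ hρJ0 hnR hX0
    have hle := not_lt.mp hcase
    nlinarith [hA2, hB2, hSaI, hSbJ, hsq, hle,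
      mul_le_mul_of_nonneg_left hle (le_of_lt hnR)]
end
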